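/- arXiv:2305.18131 — 14 statements merged into one kernel-verified Lean document; each statement's English description precedes it below -/
import Mathlib

section
/- Let S be an extremally disconnected profinite set. Then the ring C(S, ℝ) of continuous real-valued functions on S is semi-hereditary; in fact every finitely generated ideal of C(S, ℝ) is principal and projective as a C(S, ℝ)-module. -/
/-!
In an extremally disconnected space the sets `closure {f < t * k}` are clopen and increase with
`t`, so `x ↦ inf {t | x ∈ closure {f < t * k}}` is continuous; where `k ≠ 0` it equals `f / k`.
Hence `|f| ≤ |k|` forces `k ∣ f`. This makes `C(X, ℝ)` Bézout, since
`(f, g) = (|f| + |g|)`, and the annihilator of `g` is cut out by the idempotent indicator `e` of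
`tsupport g`, so `(g) ≅ (e)` is a direct summand of `C(X, ℝ)`.
-/

open Set

theorem continuous_sInf_setOf_mem {X : Type*} [TopologicalSpace X] {B : ℝ → Set X}
    (hB : ∀ t, IsClopen (B t)) (hmono : Monotone B) (hbdd : ∀ x, BddBelow {t | x ∈ B t})
    (hne : ∀ x, {t | x ∈ B t}.Nonempty) : Continuous fun x ↦ sInf {t | x ∈ B t} := by
  refine OrderTopology.continuous_iff.2 fun r ↦ ⟨?_, ?_⟩
  · have hle : (fun x ↦ sInf {t | x ∈ B t}) ⁻¹' Iic r = ⋂ t > r, B t := by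
      ext x
      simp only [mem_preimage, mem_Iic, mem_iInter]
      refine ⟨fun hx t ht ↦ ?_, fun hx ↦
        le_of_forall_gt_imp_ge_of_dense fun t ht ↦ csInf_le (hbdd x) (hx t ht)⟩
      obtain ⟨s, hs, hst⟩ := (csInf_lt_iff (hbdd x) (hne x)).1 (hx.trans_lt ht)
      exact hmono hst.le hs
    rw [← compl_Iic, preimage_compl, hle]
    exact (isClosed_biInter fun t _ ↦ (hB t).isClosed).isOpen_compl
  · have hlt : (fun x ↦ sInf {t | x ∈ B t}) ⁻¹' Iio r = ⋃ t < r, B t := by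
      ext x
      rw [mem_preimage, mem_Iio, csInf_lt_iff (hbdd x) (hne x)]
      simp [and_comm]
    rw [hlt]
    exact isOpen_biUnion fun t _ ↦ (hB t).isOpen

theorem Ideal.projective_span_singleton_of_mul_eq_zero_iff {R : Type*} [CommRing R] {g e : R}
    (he : IsIdempotentElem e) (hann : ∀ r, r * g = 0 ↔ r * e = 0) :
    Module.Projective R (Ideal.span {g}) := by
  have heg : e * g = g := by
    have := (hann (1 - e)).2 (by rw [sub_mul, one_mul, he.eq, sub_self])
    rwa [sub_mul, one_mul, sub_eq_zero, eq_comm] at this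
  set μ := LinearMap.toSpanSingleton R (Ideal.span {g}) ⟨g, Ideal.mem_span_singleton_self g⟩
  have hμ : Function.Surjective μ := by
    rintro ⟨y, hy⟩
    obtain ⟨r, rfl⟩ := Ideal.mem_span_singleton'.1 hy
    exact ⟨r, rfl⟩
  have hker : LinearMap.ker μ ≤ LinearMap.ker (LinearMap.toSpanSingleton R R e) := fun r hr ↦
    (hann r).1 (congrArg Subtype.val hr)
  refine .of_split ((LinearMap.ker μ).liftQ _ hker ∘ₗ (μ.quotKerEquivOfSurjective hμ).symm) μ ?_
  refine LinearMap.ext fun y ↦ ?_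
  obtain ⟨r, rfl⟩ := hμ y
  rw [LinearMap.comp_apply, LinearMap.comp_apply, LinearEquiv.coe_coe,
    LinearMap.quotKerEquivOfSurjective_symm_apply, Submodule.liftQ_apply]
  exact Subtype.ext (show r * e * g = r * g by rw [mul_assoc, heg])

namespace ContinuousMap

variable {X : Type*} [TopologicalSpace X] [ExtremallyDisconnected X]

theorem isClopen_tsupport {Y : Type*} [TopologicalSpace Y] [Zero Y] [T2Space Y] (g : C(X, Y)) :
    IsClopen (tsupport g) :=
  ⟨isClosed_tsupport g,
    ExtremallyDisconnected.open_closure _ (isOpen_ne_fun g.continuous continuous_const)⟩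

noncomputable def tsupportIndicator (g : C(X, ℝ)) : C(X, ℝ) :=
  ⟨(tsupport g).indicator 1, (isClopen_tsupport g).continuous_indicator continuous_const⟩

theorem tsupportIndicator_of_mem {g : C(X, ℝ)} {x : X} (hx : x ∈ tsupport g) :
    tsupportIndicator g x = 1 :=
  indicator_of_mem hx 1

theorem tsupportIndicator_of_notMem {g : C(X, ℝ)} {x : X} (hx : x ∉ tsupport g) :
    tsupportIndicator g x = 0 :=
  indicator_of_notMem hx 1

theorem isIdempotentElem_tsupportIndicator (g : C(X, ℝ)) :
    IsIdempotentElem (tsupportIndicator g) := by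
  ext x
  by_cases hx : x ∈ tsupport g
  · simp [tsupportIndicator_of_mem hx]
  · simp [tsupportIndicator_of_notMem hx]

theorem mul_eq_zero_iff_mul_tsupportIndicator_eq_zero (g r : C(X, ℝ)) :
    r * g = 0 ↔ r * tsupportIndicator g = 0 := by
  have hvanish : r * g = 0 ↔ ∀ x ∈ tsupport g, r x = 0 := by
    refine ⟨fun h ↦ closure_minimal (fun x hx ↦ ?_) (isClosed_eq r.continuous continuous_const),
      fun h ↦ ext fun x ↦ ?_⟩
    · exact (mul_eq_zero.1 congr($h x)).resolve_right hx
    · by_cases hx : g x = 0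
      · simp [hx]
      · simp [h x (subset_tsupport _ hx)]
  rw [hvanish]
  refine ⟨fun h ↦ ext fun x ↦ ?_, fun h x hx ↦ ?_⟩
  · by_cases hx : x ∈ tsupport g
    · simp [h x hx]
    · simp [tsupportIndicator_of_notMem hx]
  · simpa [tsupportIndicator_of_mem hx] using congr($h x)

theorem dvd_of_abs_le_of_dense {f k : C(X, ℝ)} (hfk : ∀ x, |f x| ≤ k x)
    (hk : Dense {x | k x ≠ 0}) : k ∣ f := by
  have hk0 (x : X) : 0 ≤ k x := (abs_nonneg _).trans (hfk x)
  set B : ℝ → Set X := fun t ↦ closure {x | f x < t * k x}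
  have hB (t : ℝ) : IsClopen (B t) := ⟨isClosed_closure, ExtremallyDisconnected.open_closure _
    (isOpen_lt f.continuous (continuous_const.mul k.continuous))⟩
  have hmono : Monotone B := fun s t hst ↦
    closure_mono fun x hx ↦ hx.trans_le (mul_le_mul_of_nonneg_right hst (hk0 x))
  have hbdd (x : X) : BddBelow {t | x ∈ B t} := by
    refine ⟨-1, fun t ht ↦ le_of_not_gt fun htl ↦ ?_⟩
    have hempty : {x | f x < t * k x} = ∅ := eq_empty_of_forall_notMem fun y hy ↦ by
      have := neg_abs_le (f y)
      nlinarith [hfk y, hk0 y, hy.out]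
    simp [B, hempty] at ht
  have hne (x : X) : {t | x ∈ B t}.Nonempty := by
    refine ⟨2, ?_⟩
    have hdense : Dense {x | f x < 2 * k x} := hk.mono fun y (hy : k y ≠ 0) ↦ show f y < 2 * k y by
      have := le_abs_self (f y)
      have : 0 < k y := (hk0 y).lt_of_ne' hy
      linarith [hfk y]
    simp [B, hdense.closure_eq]
  set h : C(X, ℝ) := ⟨_, continuous_sInf_setOf_mem hB hmono hbdd hne⟩
  have hquot (x : X) (hx : k x ≠ 0) : h x = f x / k x := by
    have hpos : 0 < k x := (hk0 x).lt_of_ne' hx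
    refine le_antisymm (le_of_forall_gt_imp_ge_of_dense fun t ht ↦ csInf_le (hbdd x) ?_)
      (le_csInf (hne x) fun t ht ↦ (div_le_iff₀ hpos).2 ?_)
    · exact subset_closure ((div_lt_iff₀ hpos).1 ht)
    · exact closure_lt_subset_le f.continuous (continuous_const.mul k.continuous) ht
  refine ⟨h, ext (congrFun (Continuous.ext_on hk f.continuous (k * h).continuous
    fun x hx ↦ ?_))⟩
  simp [hquot x hx, mul_div_cancel₀ _ hx]

theorem dvd_of_abs_le {f k : C(X, ℝ)} (hfk : ∀ x, |f x| ≤ |k x|) : k ∣ f := by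
  set e := tsupportIndicator k
  -- `m = k²` on `tsupport k` and `m = 1` off it, so `m` vanishes only on a nowhere dense set.
  set m := k * k + (1 - e)
  have hfkm (x : X) : |(f * k) x| ≤ m x := by
    have he : e x ≤ 1 := by
      by_cases hx : x ∈ tsupport k
      · simp [e, tsupportIndicator_of_mem hx]
      · simp [e, tsupportIndicator_of_notMem hx]
    have := mul_le_mul_of_nonneg_right (hfk x) (abs_nonneg (k x))
    simp only [mul_apply, abs_mul, abs_mul_abs_self] at this ⊢
    simp only [m, add_apply, mul_apply, sub_apply, one_apply]
    linarith
  have hm : Dense {x | m x ≠ 0} := by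
    refine Dense.mono ?_ (s₁ := Function.support k ∪ (tsupport k)ᶜ) ?_
    · intro x hx
      rcases hx with hx | hx
      · simpa [m, e, tsupportIndicator_of_mem (subset_tsupport _ hx)] using hx
      · simp [m, e, tsupportIndicator_of_notMem hx, image_eq_zero_of_notMem_tsupport hx]
    · rw [dense_iff_closure_eq, closure_union, eq_univ_iff_forall]
      intro x
      by_cases hx : x ∈ tsupport k
      · exact Or.inl hx
      · exact Or.inr (subset_closure hx)
  obtain ⟨h, hh⟩ := dvd_of_abs_le_of_dense hfkm hm
  refine ⟨h, ext fun x ↦ ?_⟩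
  by_cases hx : k x = 0
  · simpa [hx] using hfk x
  · have hex : e x = 1 := tsupportIndicator_of_mem (subset_tsupport _ hx)
    have hhx := congr($hh x)
    simp only [m, mul_apply, add_apply, sub_apply, one_apply, hex, sub_self, add_zero] at hhx
    show f x = k x * h x
    exact mul_left_cancel₀ hx (by rw [mul_comm, hhx]; ring)

theorem span_pair_eq_span_abs_add_abs (f g : C(X, ℝ)) :
    Ideal.span {f, g} = Ideal.span {|f| + |g|} := by
  refine le_antisymm (Ideal.span_le.2 ?_) (Ideal.span_le.2 ?_)
  · have habs (x : X) : |(|f| + |g|) x| = |f x| + |g x| := by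
      rw [add_apply, abs_apply, abs_apply, abs_of_nonneg (by positivity)]
    rw [insert_subset_iff, singleton_subset_iff]
    constructor <;> refine Ideal.mem_span_singleton.2 (dvd_of_abs_le fun x ↦ ?_) <;>
      linarith [habs x, abs_nonneg (f x), abs_nonneg (g x)]
  · rintro _ rfl
    obtain ⟨u, hu⟩ := dvd_of_abs_le (f := |f|) (k := f) fun x ↦ by simp
    obtain ⟨v, hv⟩ := dvd_of_abs_le (f := |g|) (k := g) fun x ↦ by simp
    exact Ideal.mem_span_pair.2 ⟨u, v, by rw [hu, hv]; ring⟩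

instance : IsBezout C(X, ℝ) :=
  IsBezout.iff_span_pair_isPrincipal.2 fun f g ↦ ⟨⟨_, span_pair_eq_span_abs_add_abs f g⟩⟩

theorem projective_span_singleton (g : C(X, ℝ)) : Module.Projective C(X, ℝ) (Ideal.span {g}) :=
  Ideal.projective_span_singleton_of_mul_eq_zero_iff (isIdempotentElem_tsupportIndicator g)
    (mul_eq_zero_iff_mul_tsupportIndicator_eq_zero g)

end ContinuousMap

theorem stmt_0_general (S : Type) [TopologicalSpace S] [ExtremallyDisconnected S]
    (I : Ideal C(S, ℝ)) (hI : I.FG) :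
    Submodule.IsPrincipal I ∧ Module.Projective C(S, ℝ) I := by
  have := IsBezout.isPrincipal_of_FG I hI
  rw [← Ideal.span_singleton_generator I]
  exact ⟨inferInstance, ContinuousMap.projective_span_singleton _⟩

/-- For an extremally disconnected profinite set `S`, the ring `C(S, ℝ)` of
continuous real-valued functions is semi-hereditary; in fact every finitely generated ideal is
principal and projective. -/
theorem stmt_0 (S : Type) [TopologicalSpace S] [CompactSpace S] [T2Space S]
    [TotallyDisconnectedSpace S] [ExtremallyDisconnected S]
    (I : Ideal C(S, ℝ)) (hI : I.FG) :
    Submodule.IsPrincipal I ∧ Module.Projective C(S, ℝ) I :=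
  stmt_0_general S I hI
end

section
/- Let p be a prime and let S be an extremally disconnected profinite set. Then the ring C(S, ℤ_p) of continuous ℤ_p-valued functions on S is semi-hereditary; in fact every finitely generated ideal of C(S, ℤ_p) is principal and projective as a C(S, ℤ_p)-module. -/
/-!
*`C(S, ℤ_p)` is Bézout.* By Gleason's theorem `S` is projective among compact Hausdorff
spaces, so a continuous map from an open `U ⊆ S` to a compact Hausdorff space extends to `S`
(take a section of the projection from the closure of its graph). Hence if `‖g‖ ≤ ‖f‖`
pointwise, the quotient `g / f`, continuous on `{f ≠ 0}`, extends and `f ∣ g`. Given `f, g`,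
the function `h` equal to `f` on the clopen set `closure {‖g‖ < ‖f‖}` and to `g` off it lies
in `(f, g)` and has `‖h‖ = max ‖f‖ ‖g‖`, so `(f, g) = (h)`.

*Principal ideals are projective.* If `e` is the indicator of the clopen set
`closure {h ≠ 0}`, then `e h = h` and every `b` with `b h = 0` kills `e`, so
`(h) ≅ R ⧸ ann h` is a direct summand of `R` via `a ↦ a e`.
-/

theorem Ideal.projective_span_singleton_of_torsionOf_le {R : Type*} [CommRing R] {h e : R}
    (heh : e * h = h) (hle : Ideal.torsionOf R R h ≤ Ideal.torsionOf R R e) :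
    Module.Projective R (Ideal.span {h}) := by
  let i : (R ⧸ Ideal.torsionOf R R h) →ₗ[R] R :=
    (Ideal.torsionOf R R h).liftQ (LinearMap.toSpanSingleton R R e) hle
  have : Module.Projective R (R ⧸ Ideal.torsionOf R R h) := by
    refine .of_split i (Submodule.mkQ _) (Submodule.linearMap_qext _ (LinearMap.ext_ring ?_))
    change Submodule.Quotient.mk ((1 : R) • e) =
      (Submodule.Quotient.mk 1 : R ⧸ Ideal.torsionOf R R h)
    rw [Submodule.Quotient.eq, Ideal.mem_torsionOf_iff, smul_eq_mul, one_smul, sub_mul, heh,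
      one_mul, sub_self]
  exact .of_equiv (Ideal.quotTorsionOfEquivSpanSingleton R R h)

universe u

theorem ExtremallyDisconnected.exists_restrict_eq_of_isOpen {S Z : Type u} [TopologicalSpace S]
    [CompactSpace S] [T2Space S] [ExtremallyDisconnected S] [TopologicalSpace Z] [CompactSpace Z]
    [T2Space Z] [Nonempty Z] {U : Set S} (hU : IsOpen U) (q : C(U, Z)) :
    ∃ c : C(S, Z), c.restrict U = q := by
  let Y : Set (S × Z) := closure {y | ∀ hy : y.1 ∈ U, y.2 = q ⟨y.1, hy⟩}
  -- Over the open set `U`, where `q` is continuous, taking the closure adds no points.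
  have hY : ∀ y ∈ Y, ∀ hy : y.1 ∈ U, y.2 = q ⟨y.1, hy⟩ := by
    rintro ⟨x, z⟩ hxz hx
    by_contra hne
    obtain ⟨A, B, hA, hB, hzA, hqB, hAB⟩ := t2_separation hne
    have hW : IsOpen (Subtype.val '' (q ⁻¹' B)) :=
      hU.isOpenMap_subtype_val _ (hB.preimage q.continuous)
    obtain ⟨_, ⟨⟨⟨x', hx'⟩, hqx', rfl⟩, hz'⟩, hgraph⟩ :=
      mem_closure_iff.mp hxz _ (hW.prod hA) ⟨⟨⟨x, hx⟩, hqB, rfl⟩, hzA⟩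
    exact hAB.ne_of_mem hz' hqx' (hgraph hx')
  have : CompactSpace Y := isCompact_iff_compactSpace.mp isClosed_closure.isCompact
  have hsurj : Function.Surjective fun y : Y => y.1.1 := by
    intro x
    by_cases hx : x ∈ U
    · exact ⟨⟨(x, q ⟨x, hx⟩), subset_closure fun _ => rfl⟩, rfl⟩
    · exact ⟨⟨(x, Classical.arbitrary Z), subset_closure fun h => absurd h hx⟩, rfl⟩
  obtain ⟨s, hs, hsec⟩ := CompactT2.ExtremallyDisconnected.projective (A := S) continuous_id
    (by fun_prop) hsurj
  refine ⟨⟨fun x => (s x).1.2, by fun_prop⟩, ContinuousMap.ext fun x => ?_⟩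
  have hx : (s x).1.1 = x := congrFun hsec x
  rw [ContinuousMap.restrict_apply, ContinuousMap.coe_mk,
    hY _ (s x).2 (by rw [hx]; exact x.2)]
  exact congrArg q (Subtype.ext hx)

theorem ContinuousMap.projective_span_singleton_s1 {S R : Type*} [TopologicalSpace S]
    [ExtremallyDisconnected S] [CommRing R] [TopologicalSpace R] [IsTopologicalRing R]
    [T1Space R] [NoZeroDivisors R] (h : C(S, R)) :
    Module.Projective C(S, R) (Ideal.span {h}) := by
  let D : Set S := {x | h x ≠ 0}
  have hD : IsClopen (closure D) :=
    ⟨isClosed_closure, ExtremallyDisconnected.open_closure _ (isOpen_ne_fun h.2 continuous_const)⟩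
  let e : C(S, R) := (LocallyConstant.charFn R hD).toContinuousMap
  have he : ∀ x, e x = (closure D).indicator 1 x := fun _ => rfl
  refine Ideal.projective_span_singleton_of_torsionOf_le (e := e) ?_ fun b hb => ?_
  · ext x
    by_cases hx : x ∈ closure D
    · simp [he, hx]
    · have : h x = 0 := not_not.mp fun hne => hx (subset_closure hne)
      simp [this]
  · rw [Ideal.mem_torsionOf_iff, smul_eq_mul] at hb ⊢
    have hbD : D ⊆ b ⁻¹' {0} := fun x hx =>
      (mul_eq_zero.mp (congrArg (· x) hb)).resolve_right hx
    have hb0 := closure_minimal hbD (isClosed_singleton.preimage b.2)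
    ext x
    by_cases hx : x ∈ closure D
    · simp [show b x = 0 from hb0 hx]
    · simp [he, hx]

namespace PadicInt

variable {p : ℕ} [Fact p.Prime] {S : Type} [TopologicalSpace S] [CompactSpace S] [T2Space S]
  [ExtremallyDisconnected S]

theorem continuousMap_dvd_of_norm_le {f g : C(S, ℤ_[p])} (hfg : ∀ x, ‖g x‖ ≤ ‖f x‖) : f ∣ g := by
  let U : Set S := {x | f x ≠ 0}
  have hquot : ∀ x : U, ‖(g x : ℚ_[p]) / f x‖ ≤ 1 := fun x => by
    rw [norm_div, div_le_one (norm_pos_iff.mpr (coe_ne_zero.mpr x.2))]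
    exact hfg x
  let q : C(U, ℤ_[p]) := ⟨fun x => ⟨(g x : ℚ_[p]) / f x, hquot x⟩, by
    refine isOpenEmbedding_coe.isInducing.continuous_iff.mpr (Continuous.div ?_ ?_ ?_)
    · exact isOpenEmbedding_coe.continuous.comp (g.2.comp continuous_subtype_val)
    · exact isOpenEmbedding_coe.continuous.comp (f.2.comp continuous_subtype_val)
    · exact fun x => coe_ne_zero.mpr x.2⟩
  obtain ⟨c, hc⟩ := ExtremallyDisconnected.exists_restrict_eq_of_isOpen
    (isOpen_ne_fun f.2 continuous_const) q
  refine ⟨c, ContinuousMap.ext fun x => ?_⟩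
  by_cases hx : f x = 0
  · have : g x = 0 := norm_le_zero_iff.mp (by simpa [hx] using hfg x)
    simp [hx, this]
  · rw [ContinuousMap.mul_apply, show c x = q ⟨x, hx⟩ from DFunLike.congr_fun hc ⟨x, hx⟩]
    refine ext (?_ : (g x : ℚ_[p]) = f x * ((g x : ℚ_[p]) / f x))
    rw [mul_div_cancel₀ _ (coe_ne_zero.mpr hx)]

theorem continuousMap_span_pair_isPrincipal (f g : C(S, ℤ_[p])) :
    (Ideal.span {f, g}).IsPrincipal := by
  let U : Set S := {x | ‖g x‖ < ‖f x‖}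
  have hU : IsClopen (closure U) := ⟨isClosed_closure,
    ExtremallyDisconnected.open_closure _ (isOpen_lt (by fun_prop) (by fun_prop))⟩
  let e : C(S, ℤ_[p]) := (LocallyConstant.charFn ℤ_[p] hU).toContinuousMap
  have he : ∀ x, e x = (closure U).indicator 1 x := fun _ => rfl
  let h := e * f + (1 - e) * g
  have hle : ∀ x, ‖f x‖ ≤ ‖h x‖ ∧ ‖g x‖ ≤ ‖h x‖ := fun x => by
    by_cases hx : x ∈ closure U
    · have hgf : ‖g x‖ ≤ ‖f x‖ := closure_lt_subset_le (by fun_prop) (by fun_prop) hx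
      simp [h, he, hx, hgf]
    · have hfg : ‖f x‖ ≤ ‖g x‖ := not_lt.mp fun hlt => hx (subset_closure hlt)
      simp [h, he, hx, hfg]
  refine ⟨h, le_antisymm ?_ ?_⟩
  · rw [Ideal.span_le, Set.insert_subset_iff, Set.singleton_subset_iff]
    exact ⟨Ideal.mem_span_singleton.mpr (continuousMap_dvd_of_norm_le fun x => (hle x).1),
      Ideal.mem_span_singleton.mpr (continuousMap_dvd_of_norm_le fun x => (hle x).2)⟩
  · rw [Submodule.span_le, Set.singleton_subset_iff]
    exact Ideal.add_mem _ (Ideal.mul_mem_left _ _ (Ideal.subset_span (by simp)))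
      (Ideal.mul_mem_left _ _ (Ideal.subset_span (by simp)))

instance : IsBezout C(S, ℤ_[p]) :=
  IsBezout.iff_span_pair_isPrincipal.mpr continuousMap_span_pair_isPrincipal

end PadicInt

theorem stmt_1_general (p : ℕ) [Fact p.Prime] (S : Type) [TopologicalSpace S] [CompactSpace S]
    [T2Space S] [ExtremallyDisconnected S]
    (I : Ideal C(S, ℤ_[p])) (hI : I.FG) :
    Submodule.IsPrincipal I ∧ Module.Projective C(S, ℤ_[p]) I := by
  obtain ⟨h, rfl⟩ := (IsBezout.isPrincipal_of_FG I hI).principal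
  exact ⟨⟨h, rfl⟩, ContinuousMap.projective_span_singleton_s1 h⟩

/-- For a prime `p` and an extremally disconnected profinite set `S`, the ring
`C(S, ℤ_[p])` of continuous `ℤ_p`-valued functions is semi-hereditary; in fact every finitely
generated ideal is principal and projective. -/
theorem stmt_1 (p : ℕ) [Fact p.Prime] (S : Type) [TopologicalSpace S] [CompactSpace S]
    [T2Space S] [TotallyDisconnectedSpace S] [ExtremallyDisconnected S]
    (I : Ideal C(S, ℤ_[p])) (hI : I.FG) :
    Submodule.IsPrincipal I ∧ Module.Projective C(S, ℤ_[p]) I :=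
  stmt_1_general p S I hI
end

section
/- Let p be a prime and let S be an extremally disconnected profinite set. Then the ring C(S, ℚ_p) of continuous ℚ_p-valued functions on S is semi-hereditary; in fact every finitely generated ideal of C(S, ℚ_p) is principal and projective as a C(S, ℚ_p)-module. -/
/-!
A compact Hausdorff extremally disconnected space is projective, so a continuous function on an
open subset with values in a compact set extends to the whole space. With values in `ℚ_p` this
means that `‖f‖ ≤ ‖g‖` pointwise forces `g ∣ f`; gluing `f` and `g` along the clopen closure of
`{‖g‖ < ‖f‖}` then produces a generator of `(f, g)`, so the ring is Bézout. Finally a principal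
ideal `(h)` is projective: the indicator `e` of the clopen closure of `{h ≠ 0}` satisfies
`e h = h` and kills the annihilator of `h`, which splits `c ↦ c h`.
-/

open Set

universe u

theorem Ideal.projective_span_singleton_of_mul_eq_self {R : Type*} [CommRing R] {e h : R}
    (heh : e * h = h) (hann : ∀ x, x * h = 0 → x * e = 0) :
    Module.Projective R (Ideal.span {h}) := by
  let π : R →ₗ[R] Ideal.span {h} := (LinearMap.toSpanSingleton R R h).codRestrict _
    fun c => Ideal.mul_mem_left _ c (Ideal.mem_span_singleton_self h)
  have hπ : Function.Surjective π := by
    rintro ⟨y, hy⟩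
    obtain ⟨c, rfl⟩ := Ideal.mem_span_singleton'.mp hy
    exact ⟨c, rfl⟩
  have hker : LinearMap.ker π ≤ LinearMap.ker (LinearMap.mulLeft R e) := by
    intro c hc
    simpa [π, mul_comm e] using hann c (congrArg Subtype.val hc)
  refine Module.Projective.of_split
    (((LinearMap.ker π).liftQ _ hker).comp (π.quotKerEquivOfSurjective hπ).symm.toLinearMap) π ?_
  ext y
  obtain ⟨c, rfl⟩ := hπ y
  simp only [LinearMap.comp_apply, LinearEquiv.coe_coe, Submodule.liftQ_apply,
    LinearMap.quotKerEquivOfSurjective_symm_apply, LinearMap.mulLeft_apply, LinearMap.id_apply]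
  show e * c * h = c * h
  rw [mul_comm e, mul_assoc, heh]

theorem ContinuousOn.snd_eq_of_mem_closure_graph {S Y : Type*} [TopologicalSpace S]
    [TopologicalSpace Y] [T2Space Y] {U : Set S} (hU : IsOpen U) {φ : S → Y}
    (hφ : ContinuousOn φ U) {z : S × Y} (hz : z ∈ closure ((fun s => (s, φ s)) '' U))
    (hzU : z.1 ∈ U) : z.2 = φ z.1 := by
  have hF : ContinuousAt (fun w : S × Y => (φ w.1, w.2)) z :=
    ((hφ.continuousAt (hU.mem_nhds hzU)).comp continuousAt_fst).prodMk continuousAt_snd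
  have hdiag := hF.continuousWithinAt.mem_closure hz (t := diagonal Y) <| by
    rintro _ ⟨s, -, rfl⟩
    rfl
  rw [isClosed_diagonal.closure_eq] at hdiag
  exact hdiag.symm

/-- The graph of `φ` over `U`, together with a constant over the clopen complement of `closure U`,
is a compact space surjecting onto `S`; a continuous section of this surjection, which exists by
projectivity of `S`, is the extension. -/
theorem ExtremallyDisconnected.exists_continuousMap_eqOn {S Y : Type u} [TopologicalSpace S]
    [CompactSpace S] [T2Space S] [ExtremallyDisconnected S] [TopologicalSpace Y] [T2Space Y]
    [Nonempty Y] {U : Set S} (hU : IsOpen U) {φ : S → Y} (hφ : ContinuousOn φ U) {K : Set Y}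
    (hK : IsCompact K) (hφK : MapsTo φ U K) : ∃ ψ : C(S, Y), EqOn ψ φ U := by
  let Γ : Set (S × Y) := (fun s => (s, φ s)) '' U
  let T : Set (S × Y) := closure Γ ∪ (closure U)ᶜ ×ˢ {Classical.arbitrary Y}
  have hΓ : IsCompact (closure Γ) :=
    (isCompact_univ.prod hK).of_isClosed_subset isClosed_closure <| closure_minimal
      (by rintro _ ⟨s, hs, rfl⟩; exact ⟨trivial, hφK hs⟩) (isClosed_univ.prod hK.isClosed)
  have hT : IsCompact T := hΓ.union <|
    (ExtremallyDisconnected.open_closure U hU).isClosed_compl.isCompact.prod isCompact_singleton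
  have : CompactSpace T := isCompact_iff_compactSpace.mp hT
  have hsurj : Function.Surjective fun z : T => z.1.1 := by
    intro s
    by_cases hs : s ∈ closure U
    · have hU_sub : closure U ⊆ Prod.fst '' closure Γ := closure_minimal
        (fun u hu => ⟨(u, φ u), subset_closure ⟨u, hu, rfl⟩, rfl⟩)
        (hΓ.image continuous_fst).isClosed
      obtain ⟨z, hz, rfl⟩ := hU_sub hs
      exact ⟨⟨z, Or.inl hz⟩, rfl⟩
    · exact ⟨⟨(s, _), Or.inr ⟨hs, rfl⟩⟩, rfl⟩
  obtain ⟨σ, hσ, hσ_section⟩ := CompactT2.ExtremallyDisconnected.projective continuous_id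
    (continuous_fst.comp continuous_subtype_val) hsurj
  refine ⟨⟨fun s => (σ s).1.2, (continuous_snd.comp continuous_subtype_val).comp hσ⟩, ?_⟩
  intro s hs
  have hσs : (σ s).1.1 = s := congrFun hσ_section s
  rcases (σ s).2 with hΓs | hcompl
  · simpa [hσs] using ContinuousOn.snd_eq_of_mem_closure_graph hU hφ hΓs (by rwa [hσs])
  · exact absurd (subset_closure hs) (hσs ▸ hcompl.1)

namespace ContinuousMap

theorem charFn_apply {S R : Type*} [TopologicalSpace S] [Semiring R] [TopologicalSpace R]
    {U : Set S} (hU : IsClopen U) (s : S) [Decidable (s ∈ U)] :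
    (LocallyConstant.charFn R hU : C(S, R)) s = if s ∈ U then 1 else 0 := by
  simp [LocallyConstant.coe_charFn, Set.indicator_apply]

theorem exists_mul_eq_self_and_mul_eq_zero {S R : Type*} [TopologicalSpace S]
    [ExtremallyDisconnected S] [CommRing R] [TopologicalSpace R]
    [IsTopologicalRing R] [T1Space R] [NoZeroDivisors R] (h : C(S, R)) :
    ∃ e : C(S, R), e * h = h ∧ ∀ x, x * h = 0 → x * e = 0 := by
  classical
  let V := closure {s | h s ≠ 0}
  have hV : IsClopen V := ⟨isClosed_closure, ExtremallyDisconnected.open_closure _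
    (isClosed_singleton.preimage h.continuous).isOpen_compl⟩
  refine ⟨LocallyConstant.charFn R hV, ?_, fun x hx => ?_⟩
  · ext s
    by_cases hs : h s = 0
    · simp [hs]
    · have hsV : s ∈ V := subset_closure hs
      simp [charFn_apply, hsV]
  · have hxV : V ⊆ {s | x s = 0} := closure_minimal
      (fun s hs => (mul_eq_zero.mp (congrFun (congrArg DFunLike.coe hx) s)).resolve_right hs)
      (isClosed_singleton.preimage x.continuous)
    ext s
    by_cases hs : s ∈ V
    · have hxs : x s = 0 := hxV hs
      simp [hxs]
    · simp [charFn_apply, hs]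

section ExtremallyDisconnected

variable {S 𝕜 : Type u} [TopologicalSpace S] [CompactSpace S] [T2Space S]
  [ExtremallyDisconnected S] [NormedField 𝕜] [ProperSpace 𝕜]

theorem dvd_of_norm_le {f g : C(S, 𝕜)} (hfg : ∀ s, ‖f s‖ ≤ ‖g s‖) : g ∣ f := by
  obtain ⟨q, hq⟩ := ExtremallyDisconnected.exists_continuousMap_eqOn
    (isClosed_singleton.preimage g.continuous).isOpen_compl
    (f.continuous.continuousOn.div g.continuous.continuousOn fun _ hs => hs)
    (isCompact_closedBall (0 : 𝕜) 1)
    (fun s (hs : g s ≠ 0) => by simpa [norm_div] using div_le_one_of_le₀ (hfg s) (norm_nonneg _))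
  refine ⟨q, ContinuousMap.ext fun s => ?_⟩
  by_cases hs : g s = 0
  · simpa [hs] using hfg s
  · simp [hq hs, mul_div_cancel₀ _ hs]

instance isBezout : IsBezout C(S, 𝕜) := by
  classical
  refine IsBezout.iff_span_pair_isPrincipal.mpr fun f g => ?_
  let D := closure {s | ‖g s‖ < ‖f s‖}
  have hD : IsClopen D := ⟨isClosed_closure,
    ExtremallyDisconnected.open_closure _ (isOpen_lt g.continuous.norm f.continuous.norm)⟩
  let e : C(S, 𝕜) := LocallyConstant.charFn 𝕜 hD
  let h := e * f + (1 - e) * g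
  have hh : ∀ s, h s = if s ∈ D then f s else g s := fun s => by
    by_cases hs : s ∈ D <;> simp [h, e, charFn_apply, hs]
  have hgf : D ⊆ {s | ‖g s‖ ≤ ‖f s‖} :=
    closure_minimal (fun _ hs => le_of_lt (α := ℝ) hs)
      (isClosed_le g.continuous.norm f.continuous.norm)
  have hfg : ∀ s ∉ D, ‖f s‖ ≤ ‖g s‖ := fun s hs => not_lt.mp fun hlt => hs (subset_closure hlt)
  have hf : ∀ s, ‖f s‖ ≤ ‖h s‖ := fun s => by
    rw [hh]; split_ifs with hs; exacts [le_rfl, hfg s hs]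
  have hg : ∀ s, ‖g s‖ ≤ ‖h s‖ := fun s => by
    rw [hh]; split_ifs with hs; exacts [hgf hs, le_rfl]
  refine ⟨h, le_antisymm (Ideal.span_le.mpr ?_) ?_⟩
  · rintro _ (rfl | rfl)
    exacts [Ideal.mem_span_singleton.mpr (dvd_of_norm_le hf),
      Ideal.mem_span_singleton.mpr (dvd_of_norm_le hg)]
  · exact (Ideal.span_singleton_le_iff_mem _).mpr <| Ideal.add_mem _
      (Ideal.mul_mem_left _ _ (Ideal.subset_span (mem_insert f _)))
      (Ideal.mul_mem_left _ _ (Ideal.subset_span (mem_insert_of_mem f rfl)))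

end ExtremallyDisconnected

end ContinuousMap

theorem stmt_2_general (p : ℕ) [Fact p.Prime] (S : Type) [TopologicalSpace S] [CompactSpace S]
    [T2Space S] [ExtremallyDisconnected S]
    (I : Ideal C(S, ℚ_[p])) (hI : I.FG) :
    Submodule.IsPrincipal I ∧ Module.Projective C(S, ℚ_[p]) I := by
  obtain ⟨h, rfl⟩ := (IsBezout.isPrincipal_of_FG I hI).principal
  obtain ⟨e, heh, hann⟩ := ContinuousMap.exists_mul_eq_self_and_mul_eq_zero h
  exact ⟨⟨h, rfl⟩, Ideal.projective_span_singleton_of_mul_eq_self heh hann⟩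

/-- For a prime `p` and an extremally disconnected profinite set `S`, the ring
`C(S, ℚ_[p])` of continuous `ℚ_p`-valued functions is semi-hereditary; in fact every finitely
generated ideal is principal and projective. -/
theorem stmt_2 (p : ℕ) [Fact p.Prime] (S : Type) [TopologicalSpace S] [CompactSpace S]
    [T2Space S] [TotallyDisconnectedSpace S] [ExtremallyDisconnected S]
    (I : Ideal C(S, ℚ_[p])) (hI : I.FG) :
    Submodule.IsPrincipal I ∧ Module.Projective C(S, ℚ_[p]) I :=
  stmt_2_general p S I hI
end

section
/- Let p be a prime, let S be an extremally disconnected profinite set, and let f, g ∈ C(S, ℤ_p). Then there exists h ∈ C(S, ℤ_p) such that |f(s)| ≤ |h(s)| and |g(s)| ≤ |h(s)| for all s ∈ S and such that the ideal of C(S, ℤ_p) generated by f and g equals the principal ideal generated by h. In particular, every ideal of C(S, ℤ_p) generated by two elements is principal. -/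
/-!
Since `S` is extremally disconnected, the closure `V` of the open set `{‖g‖ < ‖f‖}` is clopen;
`h := 1_V f + (1 - 1_V) g` then lies in `(f, g)` and pointwise has the larger of the two norms.
Conversely `‖f s‖ ≤ ‖h s‖` means `h s ∣ f s` in `ℤ_[p]`, and the pointwise quotients can be chosen
continuously because extremally disconnected compact Hausdorff spaces are projective: lift
`s ↦ (f s, h s)` along the projection `{(a, b, c) | a = b * c} → {(a, b) | b ∣ a}`.
-/

universe u

theorem PadicInt.dvd_of_norm_le {p : ℕ} [Fact p.Prime] {a b : ℤ_[p]} (h : ‖a‖ ≤ ‖b‖) :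
    b ∣ a := by
  rcases eq_or_ne b 0 with rfl | hb
  · rw [norm_zero, norm_le_zero_iff] at h
    simp [h]
  · have hb' : (b : ℚ_[p]) ≠ 0 := fun hb0 ↦ hb (Subtype.ext hb0)
    have hquot : ‖(a : ℚ_[p]) / b‖ ≤ 1 := by
      rw [norm_div, padic_norm_e_of_padicInt, padic_norm_e_of_padicInt]
      exact div_le_one_of_le₀ h (norm_nonneg b)
    refine ⟨⟨(a : ℚ_[p]) / b, hquot⟩, Subtype.ext ?_⟩
    change (a : ℚ_[p]) = b * ((a : ℚ_[p]) / b)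
    field_simp

theorem ExtremallyDisconnected.exists_isClopen_forall_le_and_forall_ge {S α : Type*}
    [TopologicalSpace S] [ExtremallyDisconnected S] [LinearOrder α] [TopologicalSpace α]
    [OrderClosedTopology α] {u v : S → α} (hu : Continuous u) (hv : Continuous v) :
    ∃ V : Set S, IsClopen V ∧ (∀ s ∈ V, v s ≤ u s) ∧ ∀ s ∉ V, u s ≤ v s := by
  refine ⟨closure {s | v s < u s},
    ⟨isClosed_closure, ExtremallyDisconnected.open_closure _ (isOpen_lt hv hu)⟩, ?_, ?_⟩
  · exact fun s hs ↦ closure_minimal (fun t ht ↦ le_of_lt ht) (isClosed_le hv hu) hs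
  · exact fun s hs ↦ not_lt.1 fun hlt ↦ hs (subset_closure hlt)

namespace ContinuousMap

theorem exists_mem_span_pair_eqOn {S R : Type*} [TopologicalSpace S] [CommRing R]
    [TopologicalSpace R] [IsTopologicalRing R] {V : Set S} (hV : IsClopen V) (f g : C(S, R)) :
    ∃ h ∈ Ideal.span {f, g}, (∀ s ∈ V, h s = f s) ∧ ∀ s ∉ V, h s = g s := by
  let e : C(S, R) := ⟨V.indicator 1, hV.continuous_indicator continuous_const⟩
  refine ⟨e * f + (1 - e) * g, Ideal.mem_span_pair.2 ⟨e, 1 - e, rfl⟩, ?_, ?_⟩ <;>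
  · intro s hs
    simp [e, hs]

theorem dvd_of_forall_dvd {S R : Type u} [TopologicalSpace S] [CompactSpace S] [T2Space S]
    [ExtremallyDisconnected S] [CommRing R] [TopologicalSpace R] [IsTopologicalRing R]
    [CompactSpace R] [T2Space R] {f g : C(S, R)} (hdvd : ∀ s, g s ∣ f s) : g ∣ f := by
  let E : Set ((R × R) × R) := {x | x.1.1 = x.1.2 * x.2}
  have hE : IsClosed E := isClosed_eq (by fun_prop) (by fun_prop)
  have : CompactSpace E := isCompact_iff_compactSpace.mp hE.isCompact
  let π : E → R × R := fun x ↦ x.1.1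
  have hπ : Continuous π := by fun_prop
  have : CompactSpace (Set.range π) := isCompact_iff_compactSpace.mp (isCompact_range hπ)
  let φ : S → Set.range π := fun s ↦
    ⟨(f s, g s), ⟨⟨((f s, g s), (hdvd s).choose), (hdvd s).choose_spec⟩, rfl⟩⟩
  obtain ⟨ψ, hψ, hψφ⟩ := CompactT2.ExtremallyDisconnected.projective (by fun_prop : Continuous φ)
    hπ.rangeFactorization Set.rangeFactorization_surjective
  refine ⟨⟨fun s ↦ (ψ s).1.2, by fun_prop⟩, ext fun s ↦ ?_⟩
  have hfg : (ψ s).1.1 = (f s, g s) := congrArg Subtype.val (congrFun hψφ s)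
  have hmul : (ψ s).1.1.1 = (ψ s).1.1.2 * (ψ s).1.2 := (ψ s).2
  rw [hfg] at hmul
  exact hmul

end ContinuousMap

theorem stmt_3_general (p : ℕ) [Fact p.Prime] (S : Type) [TopologicalSpace S] [CompactSpace S]
    [T2Space S] [ExtremallyDisconnected S]
    (f g : C(S, ℤ_[p])) :
    (∃ h : C(S, ℤ_[p]), (∀ s : S, ‖f s‖ ≤ ‖h s‖ ∧ ‖g s‖ ≤ ‖h s‖) ∧
      Ideal.span {f, g} = Ideal.span {h}) ∧
    Submodule.IsPrincipal (Ideal.span {f, g} : Ideal C(S, ℤ_[p])) := by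
  obtain ⟨V, hV, hgf, hfg⟩ := ExtremallyDisconnected.exists_isClopen_forall_le_and_forall_ge
    (u := fun s ↦ ‖f s‖) (v := fun s ↦ ‖g s‖) (by fun_prop) (by fun_prop)
  obtain ⟨h, hmem, hf, hg⟩ := ContinuousMap.exists_mem_span_pair_eqOn hV f g
  have hnorm : ∀ s, ‖f s‖ ≤ ‖h s‖ ∧ ‖g s‖ ≤ ‖h s‖ := by
    intro s
    by_cases hs : s ∈ V
    · rw [hf s hs]
      exact ⟨le_rfl, hgf s hs⟩
    · rw [hg s hs]
      exact ⟨hfg s hs, le_rfl⟩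
  have hdvd {k : C(S, ℤ_[p])} (hk : ∀ s, ‖k s‖ ≤ ‖h s‖) : k ∈ Ideal.span {h} :=
    Ideal.mem_span_singleton.2 <|
      ContinuousMap.dvd_of_forall_dvd fun s ↦ PadicInt.dvd_of_norm_le (hk s)
  have hspan : Ideal.span {f, g} = Ideal.span {h} :=
    le_antisymm (Ideal.span_le.2 <| Set.pair_subset_iff.2
        ⟨hdvd fun s ↦ (hnorm s).1, hdvd fun s ↦ (hnorm s).2⟩)
      ((Ideal.span_singleton_le_iff_mem _).2 hmem)
  exact ⟨⟨h, hnorm, hspan⟩, ⟨h, hspan⟩⟩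

/-- Let `p` be a prime, `S` an extremally disconnected profinite set and
`f, g ∈ C(S, ℤ_[p])`. Then there is `h ∈ C(S, ℤ_[p])` with `‖f s‖ ≤ ‖h s‖` and `‖g s‖ ≤ ‖h s‖`
for all `s`, such that the ideal generated by `f` and `g` is the principal ideal generated by
`h`; in particular every ideal of `C(S, ℤ_[p])` generated by two elements is principal. -/
theorem stmt_3 (p : ℕ) [Fact p.Prime] (S : Type) [TopologicalSpace S] [CompactSpace S]
    [T2Space S] [TotallyDisconnectedSpace S] [ExtremallyDisconnected S]
    (f g : C(S, ℤ_[p])) :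
    (∃ h : C(S, ℤ_[p]), (∀ s : S, ‖f s‖ ≤ ‖h s‖ ∧ ‖g s‖ ≤ ‖h s‖) ∧
      Ideal.span {f, g} = Ideal.span {h}) ∧
    Submodule.IsPrincipal (Ideal.span {f, g} : Ideal C(S, ℤ_[p])) :=
  stmt_3_general p S f g
end

section
/- Let S be an extremally disconnected compact Hausdorff space and let Λ be a commutative T1 topological ring without zero divisors. Let f ∈ C(S, Λ), set U = {s ∈ S : f(s) ≠ 0}, and let e ∈ C(S, Λ) be the characteristic function of the complement of the closure of U (which is a clopen subset of S, so e is continuous and idempotent). Then the annihilator ideal Ann(f) = {g ∈ C(S, Λ) : g·f = 0} is the principal ideal generated by e; consequently the short exact sequence 0 → Ann(f) → C(S, Λ) → (f) → 0 splits and the principal ideal (f) is a projective C(S, Λ)-module. -/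
/-!
A continuous `g` with `g * f = 0` has open support disjoint from the support of `f`, hence
disjoint from its closure, off which `e = 1`; so `g = g * e`. Thus `Ann(f) = (e)` with
`e` idempotent, and `g * (1 - e)` depends only on `g * f`: this gives a section of
`g ↦ g * f` onto `(f)`, which makes `(f)` a direct summand of the free module `C(S, Λ)`.
-/

open Function Ideal

theorem Continuous.disjoint_support_tsupport_of_mul_eq_zero {X R : Type*} [TopologicalSpace X]
    [TopologicalSpace R] [T1Space R] [MulZeroClass R] [NoZeroDivisors R] {f g : X → R}
    (hg : Continuous g) (hgf : g * f = 0) : Disjoint (support g) (tsupport f) := by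
  refine Disjoint.closure_right ?_ hg.isOpen_support
  rw [Set.disjoint_iff_inter_eq_empty, ← support_mul', hgf, support_zero]

section

variable {A : Type*} [CommRing A] {e f : A}

theorem Ideal.mul_eq_zero_iff_mem_span_singleton (hef : e * f = 0)
    (he : ∀ g, g * f = 0 → g * e = g) (g : A) : g * f = 0 ↔ g ∈ span {e} := by
  refine ⟨fun hg => mem_span_singleton'.2 ⟨g, he g hg⟩, fun hg => ?_⟩
  obtain ⟨a, rfl⟩ := mem_span_singleton'.1 hg
  rw [mul_assoc, hef, mul_zero]

theorem Ideal.exists_linearMap_mul_eq_of_mul_eq_zero (hef : e * f = 0)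
    (he : ∀ g, g * f = 0 → g * e = g) :
    ∃ σ : span {f} →ₗ[A] A, ∀ x : span {f}, σ x * f = x := by
  let π : A →ₗ[A] span {f} := LinearMap.toSpanSingleton A _ ⟨f, mem_span_singleton_self f⟩
  have hπ : Surjective π := by
    rintro ⟨x, hx⟩
    obtain ⟨a, rfl⟩ := mem_span_singleton'.1 hx
    exact ⟨a, rfl⟩
  have hker : LinearMap.ker π ≤ LinearMap.ker (LinearMap.mulRight A (1 - e)) := by
    intro g hg
    have hgf : g * f = 0 := congrArg Subtype.val hg
    simp [mul_sub, he g hgf]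
  refine ⟨(LinearMap.ker π).liftQ _ hker ∘ₗ (π.quotKerEquivOfSurjective hπ).symm, ?_⟩
  intro x
  obtain ⟨g, rfl⟩ := hπ x
  have hσ : (π.quotKerEquivOfSurjective hπ).symm (π g) = Submodule.Quotient.mk g :=
    (LinearEquiv.symm_apply_eq _).2 rfl
  calc _ = g * (1 - e) * f := by
        rw [LinearMap.comp_apply, LinearEquiv.coe_coe, hσ, Submodule.liftQ_apply,
          LinearMap.mulRight_apply]
    _ = g * f := by rw [mul_assoc, sub_mul, hef, one_mul, sub_zero]
    _ = π g := rfl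

theorem Ideal.projective_span_singleton_of_linearMap (σ : span {f} →ₗ[A] A)
    (hσ : ∀ x : span {f}, σ x * f = x) : Module.Projective A (span {f}) :=
  Module.Projective.of_split σ (LinearMap.toSpanSingleton A _ ⟨f, mem_span_singleton_self f⟩)
    (LinearMap.ext fun x => Subtype.ext (hσ x))

end

theorem stmt_4_general (S : Type) [TopologicalSpace S]
    (Λ : Type) [CommRing Λ] [TopologicalSpace Λ] [IsTopologicalRing Λ] [T1Space Λ]
    [NoZeroDivisors Λ]
    (f e : C(S, Λ))
    (he : ∀ s : S, (s ∈ closure {t : S | f t ≠ 0} → e s = 0) ∧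
      (s ∉ closure {t : S | f t ≠ 0} → e s = 1)) :
    (∀ g : C(S, Λ), g * f = 0 ↔ g ∈ Ideal.span {e}) ∧
    (∃ σ : (Ideal.span {f} : Ideal C(S, Λ)) →ₗ[C(S, Λ)] C(S, Λ),
      ∀ x : (Ideal.span {f} : Ideal C(S, Λ)), σ x * f = (x : C(S, Λ))) ∧
    Module.Projective C(S, Λ) (Ideal.span {f} : Ideal C(S, Λ)) := by
  have hef : e * f = 0 := by
    ext s
    by_cases hs : s ∈ tsupport f
    · simp [(he s).1 hs]
    · simp [image_eq_zero_of_notMem_tsupport hs]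
  have hann : ∀ g, g * f = 0 → g * e = g := by
    intro g hgf
    ext s
    by_cases hs : s ∈ tsupport f
    · have hgs : g s = 0 := notMem_support.1 fun hg =>
        (g.continuous.disjoint_support_tsupport_of_mul_eq_zero
          (congrArg DFunLike.coe hgf)).notMem_of_mem_left hg hs
      simp [hgs]
    · simp [(he s).2 hs]
  obtain ⟨σ, hσ⟩ := exists_linearMap_mul_eq_of_mul_eq_zero hef hann
  exact ⟨mul_eq_zero_iff_mem_span_singleton hef hann, ⟨σ, hσ⟩,
    projective_span_singleton_of_linearMap σ hσ⟩

/-- Let `S` be an extremally disconnected compact Hausdorff space and `Λ` a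
commutative T1 topological ring without zero divisors. Let `f ∈ C(S, Λ)`, let
`U = {s | f s ≠ 0}` and let `e ∈ C(S, Λ)` be the characteristic function of the complement of
the closure of `U`. Then the annihilator of `f` is the principal ideal generated by `e`;
consequently the surjection `C(S, Λ) → (f)`, `g ↦ g * f`, splits and the principal ideal `(f)`
is a projective `C(S, Λ)`-module. -/
theorem stmt_4 (S : Type) [TopologicalSpace S] [CompactSpace S] [T2Space S]
    [ExtremallyDisconnected S]
    (Λ : Type) [CommRing Λ] [TopologicalSpace Λ] [IsTopologicalRing Λ] [T1Space Λ]
    [NoZeroDivisors Λ]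
    (f e : C(S, Λ))
    (he : ∀ s : S, (s ∈ closure {t : S | f t ≠ 0} → e s = 0) ∧
      (s ∉ closure {t : S | f t ≠ 0} → e s = 1)) :
    (∀ g : C(S, Λ), g * f = 0 ↔ g ∈ Ideal.span {e}) ∧
    (∃ σ : (Ideal.span {f} : Ideal C(S, Λ)) →ₗ[C(S, Λ)] C(S, Λ),
      ∀ x : (Ideal.span {f} : Ideal C(S, Λ)), σ x * f = (x : C(S, Λ))) ∧
    Module.Projective C(S, Λ) (Ideal.span {f} : Ideal C(S, Λ)) :=
  stmt_4_general S Λ f e he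
end

section
/- Let Λ be a commutative ring and let S be a profinite set. Then the ring of locally constant Λ-valued functions on S (equivalently, the ring C(S, Λ) of continuous functions when Λ carries the discrete topology) is a flat Λ-module. -/
/-!
A continuous map from a compact space to a discrete space has finite range. Given a relation
`∑ i, f i • x i = 0` in `C(S, Λ)`, the tuple `X = (x i)ᵢ : S → Λ^ι` therefore takes finitely many
values `v`, and `x i = ∑ v, v i • 𝟙[X = v]`. Evaluating the relation at a point of `X ⁻¹' {v}`
gives `∑ i, f i * v i = 0`, so the relation is trivial and the equational criterion applies.
-/

open Module

namespace ContinuousMap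

section FiberIndicator

variable {S Y R : Type*} [TopologicalSpace S] [TopologicalSpace Y] [DiscreteTopology Y]
  [DecidableEq Y] [Semiring R] [TopologicalSpace R]

def fiberIndicator (X : C(S, Y)) (v : Y) : C(S, R) :=
  (⟨fun w => if w = v then 1 else 0, continuous_of_discreteTopology⟩ : C(Y, R)).comp X

theorem sum_smul_fiberIndicator [IsTopologicalSemiring R] (X : C(S, Y)) {T : Finset Y}
    (hT : ∀ s, X s ∈ T) (g : Y → R) (s : S) :
    (∑ v ∈ T, g v • fiberIndicator X v) s = g (X s) := by
  rw [sum_apply]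
  simp [fiberIndicator, hT s]

end FiberIndicator

variable {S R : Type*} [TopologicalSpace S] [CompactSpace S] [CommRing R] [TopologicalSpace R]
  [DiscreteTopology R]

theorem isTrivialRelation_of_sum_smul_eq_zero {ι : Type*} [Fintype ι] {f : ι → R}
    {x : ι → C(S, R)} (hfx : ∑ i, f i • x i = 0) : IsTrivialRelation f x := by
  classical
  set X : C(S, ι → R) := ContinuousMap.pi x
  set T := (isCompact_range X.continuous).finite_of_discrete.toFinset
  have hT : ∀ s, X s ∈ T := by simp [T]
  refine isTrivialRelation_iff_vanishesTrivially.mpr <|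
    .of_fintype (κ := T) (fun i v => (v : ι → R) i) (fun v => fiberIndicator X v) ?_ ?_
  · intro i
    ext s
    rw [Finset.sum_coe_sort T (fun v => v i • fiberIndicator X v), sum_smul_fiberIndicator X hT]
    rfl
  · rintro ⟨v, hv⟩
    obtain ⟨s, rfl⟩ : ∃ s, X s = v := by simpa [T] using hv
    simpa [X, mul_comm] using congr($hfx s)

instance instFlat : Flat R C(S, R) :=
  .of_forall_isTrivialRelation isTrivialRelation_of_sum_smul_eq_zero

end ContinuousMap

theorem stmt_6_general (Λ : Type) [CommRing Λ] [TopologicalSpace Λ] [DiscreteTopology Λ]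
    (S : Type) [TopologicalSpace S] [CompactSpace S] :
    Module.Flat Λ C(S, Λ) :=
  inferInstance

/-- Let `Λ` be a commutative ring (with the discrete topology) and `S` a
profinite set. Then the ring `C(S, Λ)` of continuous (equivalently, locally constant) `Λ`-valued
functions on `S` is a flat `Λ`-module. -/
theorem stmt_6 (Λ : Type) [CommRing Λ] [TopologicalSpace Λ] [DiscreteTopology Λ]
    (S : Type) [TopologicalSpace S] [CompactSpace S] [T2Space S] [TotallyDisconnectedSpace S] :
    Module.Flat Λ C(S, Λ) :=
  stmt_6_general Λ S
end

section
/- Let Λ be a commutative T1 topological ring whose underlying ring is semi-hereditary, and let S be a profinite set. Then the ring C(S, Λ) of continuous Λ-valued functions on S is a flat Λ-module (via the inclusion of Λ as constant functions). -/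
/-!
`C(S, Λ)` is a submodule of the product `Λ^S`, and every submodule `M` of `Λ^S` is flat.
For a finitely generated projective `P`, the natural map `P ⊗ Λ^S → P^S` is injective:
for `P` free of finite rank it is a transposition of coordinates, and `P` is a retract of such a
module. Given a finitely generated ideal `I`, which is projective and hence flat,
`I ⊗ M → I ⊗ Λ^S → I^S ⊆ Λ^S` is therefore injective, and it factors through `I ⊗ M → M`.
-/

open TensorProduct LinearMap

namespace TensorProduct

variable {R : Type*} [CommSemiring R] {ι : Type*}

theorem piScalarRightHom_pi_injective (κ : Type*) [Fintype κ] [DecidableEq κ] :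
    Function.Injective (piScalarRightHom R R (κ → R) ι) := by
  have transpose (x : (κ → R) ⊗[R] (ι → R)) (i : ι) (k : κ) :
      piScalarRightHom R R (κ → R) ι x i k =
        piScalarRight R R (ι → R) κ (TensorProduct.comm R _ _ x) k i := by
    induction x using TensorProduct.induction_on with
    | zero => simp
    | tmul v g => simp [mul_comm]
    | add x y hx hy => simp [hx, hy]
  intro x y hxy
  refine ((piScalarRight R R (ι → R) κ).injective.comp (TensorProduct.comm R _ _).injective) ?_
  ext k i
  simp only [Function.comp_apply, ← transpose, hxy]

theorem piScalarRightHom_injective {P : Type*} [AddCommMonoid P] [Module R P]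
    [Module.Finite R P] [Module.Projective R P] :
    Function.Injective (piScalarRightHom R R P ι) := by
  obtain ⟨n, π, s, -, -, hπs⟩ := Module.Finite.exists_comp_eq_id_of_projective R P
  have naturality : piScalarRightHom R R (Fin n → R) ι ∘ₗ s.rTensor (ι → R) =
      s.compLeft ι ∘ₗ piScalarRightHom R R P ι := TensorProduct.ext' fun p g => by
    ext i; simp
  have hs : Function.Injective (s.rTensor (ι → R)) :=
    Function.LeftInverse.injective (g := π.rTensor (ι → R)) fun x => by
      rw [← comp_apply, ← rTensor_comp, hπs, rTensor_id, id_apply]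
  refine Function.Injective.of_comp (f := s.compLeft ι) ?_
  rw [← coe_comp, ← naturality, coe_comp]
  exact (piScalarRightHom_pi_injective (Fin n)).comp hs

end TensorProduct

theorem Module.Flat.of_injective_pi {R M ι : Type*} [CommRing R] [AddCommGroup M] [Module R M]
    (hR : ∀ I : Ideal R, I.FG → Module.Projective R I) (f : M →ₗ[R] ι → R)
    (hf : Function.Injective f) : Module.Flat R M := by
  refine Module.Flat.iff_rTensor_injective.mpr fun I hI => ?_
  have := hR I hI
  have : Module.Finite R I := Module.Finite.iff_fg.mpr hI
  have key : (f ∘ₗ TensorProduct.lid R M) ∘ₗ I.subtype.rTensor M =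
      I.subtype.compLeft ι ∘ₗ piScalarRightHom R R I ι ∘ₗ f.lTensor I :=
    TensorProduct.ext' fun a m => by ext i; simp [mul_comm]
  refine Function.Injective.of_comp (f := f ∘ₗ TensorProduct.lid R M) ?_
  rw [← coe_comp, key]
  exact (Subtype.val_injective.comp_left).comp
    (piScalarRightHom_injective.comp (Module.Flat.lTensor_preserves_injective_linearMap f hf))

theorem stmt_7_general (Λ : Type) [CommRing Λ] [TopologicalSpace Λ] [IsTopologicalRing Λ]
    (hsh : ∀ I : Ideal Λ, I.FG → Module.Projective Λ I)
    (S : Type) [TopologicalSpace S] :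
    Module.Flat Λ C(S, Λ) :=
  Module.Flat.of_injective_pi hsh (ContinuousMap.coeFnLinearMap Λ) DFunLike.coe_injective

/-- Let `Λ` be a commutative T1 topological ring whose underlying ring is
semi-hereditary (every finitely generated ideal is projective), and let `S` be a profinite set.
Then the ring `C(S, Λ)` of continuous `Λ`-valued functions on `S` is a flat `Λ`-module (via the
inclusion of `Λ` as constant functions). -/
theorem stmt_7 (Λ : Type) [CommRing Λ] [TopologicalSpace Λ] [IsTopologicalRing Λ] [T1Space Λ]
    (hsh : ∀ I : Ideal Λ, I.FG → Module.Projective Λ I)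
    (S : Type) [TopologicalSpace S] [CompactSpace S] [T2Space S] [TotallyDisconnectedSpace S] :
    Module.Flat Λ C(S, Λ) :=
  stmt_7_general Λ hsh S
end

section
/- Let Λ be a regular coherent commutative ring and let T ⊆ Λ be a multiplicatively closed subset. Then the localization T⁻¹Λ is regular coherent. -/
open CategoryTheory in
/-- A module `M` over a commutative ring `R` has finite projective dimension if it admits a
projective resolution which vanishes in all sufficiently large degrees. -/
def HasFiniteProjectiveDimension (R : Type) [CommRing R] (M : Type) [AddCommGroup M]
    [Module R M] : Prop :=
  ∃ (n : ℕ) (P : ProjectiveResolution (ModuleCat.of R M)),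
    ∀ i : ℕ, n < i → Limits.IsZero (P.complex.X i)

/-- A commutative ring is regular coherent if every finitely generated ideal is finitely
presented and has finite projective dimension. -/
def IsRegularCoherentRing (R : Type) [CommRing R] : Prop :=
  (∀ I : Ideal R, I.FG → Module.FinitePresentation R I) ∧
  (∀ I : Ideal R, I.FG → HasFiniteProjectiveDimension R I)

/-!
Every finitely generated ideal of `T⁻¹Λ` is the extension `T⁻¹I` of a finitely generated ideal `I`
of `Λ`, and `T⁻¹I` is the localization of the `Λ`-module `I`. Localization is a base change, so it
preserves finite presentation; it is also exact and preserves projectives, so it sends a bounded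
projective resolution of `I` to one of `T⁻¹I`.
-/

open CategoryTheory Limits

theorem Ideal.exists_fg_map_eq_of_map_comap_eq {R S : Type*} [CommRing R] [CommRing S]
    (f : R →+* S) {J : Ideal S} (hJ : J.FG) (hJf : (J.comap f).map f = J) :
    ∃ I : Ideal R, I.FG ∧ I.map f = J := by
  classical
  rw [← hJf] at hJ
  obtain ⟨s, hs, hspan⟩ := (Submodule.fg_span_iff_fg_span_finset_subset _).mp hJ
  obtain ⟨t, -, rfl⟩ := Finset.subset_set_image_iff.mp hs
  refine ⟨Ideal.span t, Submodule.fg_span t.finite_toSet, ?_⟩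
  rw [Ideal.map_span, ← Finset.coe_image, ← hJf]
  exact hspan.symm

theorem IsLocalization.exists_fg_map_eq {R : Type*} [CommRing R] (M : Submonoid R)
    (S : Type*) [CommRing S] [Algebra R S] [IsLocalization M S] {J : Ideal S} (hJ : J.FG) :
    ∃ I : Ideal R, I.FG ∧ I.map (algebraMap R S) = J :=
  Ideal.exists_fg_map_eq_of_map_comap_eq _ hJ (IsLocalization.map_under M S J)

namespace CategoryTheory.ProjectiveResolution

variable {C : Type*} [Category C] [HasZeroObject C] [HasZeroMorphisms C]

noncomputable def ofIso {X Y : C} (P : ProjectiveResolution X) (e : X ≅ Y) :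
    ProjectiveResolution Y where
  complex := P.complex
  π := P.π ≫ (ChainComplex.single₀ C).map e.hom

end CategoryTheory.ProjectiveResolution

theorem HasFiniteProjectiveDimension.of_isLocalizedModule {R : Type} [CommRing R]
    (S : Submonoid R) {M M' : Type} [AddCommGroup M] [Module R M] [AddCommGroup M']
    [Module R M'] [Module (Localization S) M'] [IsScalarTower R (Localization S) M']
    (f : M →ₗ[R] M') [IsLocalizedModule S f] (h : HasFiniteProjectiveDimension R M) :
    HasFiniteProjectiveDimension (Localization S) M' := by
  obtain ⟨n, P, hP⟩ := h
  let F := ModuleCat.localizedModuleFunctor.{0} S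
  have := ModuleCat.localizedModule_isLocalizedModule (ModuleCat.of R M) S
  let e : ModuleCat.localizedModule (.of R M) S ≃ₗ[Localization S] M' :=
    LinearEquiv.extendScalarsOfIsLocalizationEquiv S (Localization S)
      (IsLocalizedModule.linearEquiv S ((ModuleCat.of R M).localizedModuleMkLinearMap S) f)
  exact ⟨n, (F.mapProjectiveResolution P).ofIso e.toModuleIso, fun i hi => F.map_isZero (hP i hi)⟩

theorem Module.FinitePresentation.of_isLocalizedModule {R : Type*} [CommRing R] (S : Submonoid R)
    (A : Type*) [CommRing A] [Algebra R A] [IsLocalization S A] {M M' : Type*} [AddCommGroup M]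
    [Module R M] [AddCommGroup M'] [Module R M'] [Module A M'] [IsScalarTower R A M']
    (f : M →ₗ[R] M') [IsLocalizedModule S f] [Module.FinitePresentation R M] :
    Module.FinitePresentation A M' :=
  FinitePresentation.of_isBaseChange f ((isLocalizedModule_iff_isBaseChange S A f).mp ‹_›)

/-- A localization of a regular coherent commutative ring at a multiplicatively
closed subset is regular coherent. -/
theorem stmt_10 (Λ : Type) [CommRing Λ] (T : Submonoid Λ)
    (h : IsRegularCoherentRing Λ) :
    IsRegularCoherentRing (Localization T) := by
  refine ⟨fun J hJ => ?_, fun J hJ => ?_⟩ <;>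
    obtain ⟨I, hI, rfl⟩ := IsLocalization.exists_fg_map_eq T (Localization T) hJ
  · have := h.1 I hI
    exact .of_isLocalizedModule T (Localization T) (Algebra.idealMap I (S := Localization T))
  · exact (h.2 I hI).of_isLocalizedModule T (Algebra.idealMap I (S := Localization T))
end

section
/- Let Λ be the colimit of a filtered system of commutative rings Λ_i with flat transition maps. If each Λ_i is regular coherent, then Λ is regular coherent. -/
/-!
Every finitely generated ideal `I` of the colimit `Λ` is extended from a finitely generated ideal
`J` of some stage `Λⱼ`, and `Λ` is flat over `Λⱼ`: a relation in `Λ` with coefficients in `Λⱼ`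
already holds at a later stage `Λₘ`, where it is trivial because `Λₘ` is flat over `Λⱼ`. By
flatness `Λ ⊗ J ≅ I`, so a finite presentation of `J` gives one of `I`; and `Λ ⊗ -` is exact and
preserves projectives, so it carries a finite projective resolution of `J` to one of `I`.
-/

open CategoryTheory TensorProduct

namespace Ideal

variable {R S : Type*} [CommRing R] [CommRing S] [Algebra R S] (J : Ideal R)

noncomputable def tensorToRing : S ⊗[R] J →ₗ[S] S :=
  AlgebraTensorModule.rid R S S ∘ₗ J.subtype.baseChange S

@[simp]
theorem tensorToRing_tmul (s : S) (x : J) : J.tensorToRing (s ⊗ₜ x) = algebraMap R S x * s := by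
  simp [tensorToRing, Algebra.smul_def]

theorem range_tensorToRing :
    LinearMap.range (J.tensorToRing (S := S)) = J.map (algebraMap R S) := by
  refine le_antisymm ?_ (map_le_iff_le_comap.mpr fun x hx => ⟨1 ⊗ₜ ⟨x, hx⟩, by simp⟩)
  rintro _ ⟨z, rfl⟩
  induction z with
  | zero => simp
  | tmul s x => simpa using mul_mem_right s _ (mem_map_of_mem _ x.2)
  | add a b ha hb => simpa using add_mem ha hb

theorem tensorToRing_injective [Module.Flat R S] : Function.Injective (J.tensorToRing (S := S)) :=
  (AlgebraTensorModule.rid R S S).injective.comp <| by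
    simpa only [LinearMap.baseChange_eq_ltensor] using
      Module.Flat.lTensor_preserves_injective_linearMap _ J.injective_subtype

noncomputable def tensorEquivMap [Module.Flat R S] : S ⊗[R] J ≃ₗ[S] J.map (algebraMap R S) :=
  (LinearEquiv.ofInjective _ J.tensorToRing_injective).trans
    (LinearEquiv.ofEq _ _ J.range_tensorToRing)

end Ideal

noncomputable def CategoryTheory.ProjectiveResolution.ofIso_s11 {C : Type*} [Category C]
    [Limits.HasZeroObject C] [Preadditive C] {X Y : C} (P : ProjectiveResolution X) (e : X ≅ Y) :
    ProjectiveResolution Y where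
  complex := P.complex
  π := P.π ≫ (ChainComplex.single₀ C).map e.hom

section ExtendScalars

variable {R S : Type} [CommRing R] [CommRing S] (φ : R →+* S)

instance : (ModuleCat.extendScalars φ).Additive :=
  have := Limits.preservesBinaryBiproducts_of_preservesBinaryCoproducts (ModuleCat.extendScalars φ)
  Functor.additive_of_preservesBinaryBiproducts _

instance : (ModuleCat.extendScalars φ).PreservesProjectiveObjects :=
  Functor.preservesProjectiveObjects_of_adjunction_of_preservesEpimorphisms
    (ModuleCat.extendRestrictScalarsAdj φ)

variable {φ}

theorem ModuleCat.extendScalars_map_exact (hφ : φ.Flat) (C : ShortComplex (ModuleCat R))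
    (hC : C.Exact) : (C.map (ModuleCat.extendScalars φ)).Exact := by
  algebraize [φ]
  rw [ShortComplex.ShortExact.moduleCat_exact_iff_function_exact] at hC ⊢
  exact Module.Flat.lTensor_exact S hC

theorem HasFiniteProjectiveDimension.of_linearEquiv {M N : Type} [AddCommGroup M] [Module R M]
    [AddCommGroup N] [Module R N] (e : M ≃ₗ[R] N) (h : HasFiniteProjectiveDimension R M) :
    HasFiniteProjectiveDimension R N := by
  obtain ⟨n, P, hP⟩ := h
  exact ⟨n, P.ofIso_s11 e.toModuleIso, hP⟩

theorem HasFiniteProjectiveDimension.extendScalars (hφ : φ.Flat) {M : Type} [AddCommGroup M]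
    [Module R M] (h : HasFiniteProjectiveDimension R M) :
    HasFiniteProjectiveDimension S ((ModuleCat.extendScalars φ).obj (.of R M)) := by
  have := Functor.preservesHomology_of_map_exact _ (ModuleCat.extendScalars_map_exact hφ)
  obtain ⟨n, P, hP⟩ := h
  exact ⟨n, (ModuleCat.extendScalars φ).mapProjectiveResolution P,
    fun i hi => (ModuleCat.extendScalars φ).map_isZero (hP i hi)⟩

theorem HasFiniteProjectiveDimension.ideal_map (hφ : φ.Flat) {J : Ideal R}
    (h : HasFiniteProjectiveDimension R J) : HasFiniteProjectiveDimension S (J.map φ) := by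
  algebraize [φ]
  exact (h.extendScalars hφ).of_linearEquiv J.tensorEquivMap

theorem Module.FinitePresentation.ideal_map (hφ : φ.Flat) {J : Ideal R}
    (h : Module.FinitePresentation R J) : Module.FinitePresentation S (J.map φ) := by
  algebraize [φ]
  exact .of_equiv J.tensorEquivMap

end ExtendScalars

theorem Module.IsTrivialRelation.map {R M N : Type*} [CommRing R] [AddCommGroup M] [Module R M]
    [AddCommGroup N] [Module R N] {ι : Type*} [Fintype ι] {f : ι → R} {x : ι → M}
    (h : IsTrivialRelation f x) (g : M →ₗ[R] N) : IsTrivialRelation f (g ∘ x) := by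
  obtain ⟨k, a, y, hxy, ha⟩ := h
  exact ⟨k, a, g ∘ y, fun i => by simp [hxy], ha⟩

namespace Ring.DirectLimit

variable {ι : Type*} [Preorder ι] [IsDirectedOrder ι] {G : ι → Type*} [∀ i, CommRing (G i)]
  {f : ∀ i j, i ≤ j → G i →+* G j}

theorem exists_of_finite {κ : Type*} [Finite κ] (i₀ : ι)
    (x : κ → Ring.DirectLimit G fun i j h => f i j h) :
    ∃ j, i₀ ≤ j ∧ ∃ y : κ → G j, of G (fun i j h => f i j h) j ∘ y = x := by
  have : Nonempty ι := ⟨i₀⟩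
  choose i y hy using fun k => exists_of (x k)
  obtain ⟨j, hj⟩ := Finite.exists_le fun o : Option κ => o.elim i₀ i
  have hij (k : κ) : i k ≤ j := hj (some k)
  exact ⟨j, hj none, fun k => f (i k) j (hij k) (y k), funext fun k => by simp [hy]⟩

theorem exists_fg_map_eq_of_fg [Nonempty ι] {I : Ideal (Ring.DirectLimit G fun i j h => f i j h)}
    (hI : I.FG) : ∃ j, ∃ J : Ideal (G j), J.FG ∧ J.map (of G (fun i j h => f i j h) j) = I := by
  obtain ⟨s, rfl⟩ := hI
  obtain ⟨j, -, y, hy⟩ := exists_of_finite (f := f) (Classical.arbitrary ι) (Subtype.val : s → _)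
  refine ⟨j, Ideal.span (Set.range y), Submodule.fg_span (Set.finite_range y), ?_⟩
  rw [Ideal.map_span, ← Set.range_comp, hy]
  simp

theorem flat_of [DirectedSystem G fun i j h => f i j h] (hflat : ∀ i j (h : i ≤ j), (f i j h).Flat)
    (i₀ : ι) : (of G (fun i j h => f i j h) i₀).Flat := by
  algebraize [of G (fun i j h => f i j h) i₀]
  refine Module.Flat.of_forall_isTrivialRelation fun {l c x} hcx => ?_
  obtain ⟨j, hij, z, rfl⟩ := exists_of_finite i₀ x
  have hzero : of G (fun i j h => f i j h) j (∑ k, f i₀ j hij (c k) * z k) = 0 := by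
    simpa [Algebra.smul_def, RingHom.algebraMap_toAlgebra] using hcx
  obtain ⟨m, hjm, hm⟩ := of.zero_exact hzero
  algebraize [f i₀ m (hij.trans hjm)]
  have : Module.Flat (G i₀) (G m) := hflat i₀ m _
  have hrel : ∑ k, c k • f j m hjm (z k) = 0 := by
    rw [← hm, map_sum]
    refine Finset.sum_congr rfl fun k _ => ?_
    rw [map_mul, Algebra.smul_def, RingHom.algebraMap_toAlgebra,
      DirectedSystem.map_map (f := fun i j h => f i j h)]
  let g : G m →ₐ[G i₀] Ring.DirectLimit G fun i j h => f i j h :=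
    { of G (fun i j h => f i j h) m with commutes' := fun c => of_f _ c }
  convert (Module.Flat.isTrivialRelation_of_sum_smul_eq_zero hrel).map g.toLinearMap using 1
  ext k
  exact (of_f _ _).symm

end Ring.DirectLimit

theorem IsRegularCoherentRing.of_forall_fg_eq_map {S : Type} [CommRing S]
    (h : ∀ I : Ideal S, I.FG → ∃ (R : Type) (_ : CommRing R) (φ : R →+* S) (J : Ideal R),
      φ.Flat ∧ IsRegularCoherentRing R ∧ J.FG ∧ J.map φ = I) :
    IsRegularCoherentRing S := by
  refine ⟨fun I hI => ?_, fun I hI => ?_⟩ <;>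
  obtain ⟨R, _, φ, J, hφ, hR, hJ, rfl⟩ := h I hI
  · exact .ideal_map hφ (hR.1 J hJ)
  · exact .ideal_map hφ (hR.2 J hJ)

/-- The colimit of a filtered (directed) system of regular coherent commutative
rings with flat transition maps is regular coherent. -/
theorem stmt_11 (ι : Type) [Preorder ι] [IsDirected ι (· ≤ ·)] [Nonempty ι]
    (G : ι → Type) [∀ i, CommRing (G i)]
    (f : ∀ i j, i ≤ j → G i →+* G j)
    [DirectedSystem G (fun i j h => f i j h)]
    (hflat : ∀ (i j : ι) (h : i ≤ j), (f i j h).Flat)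
    (hreg : ∀ i, IsRegularCoherentRing (G i)) :
    IsRegularCoherentRing (Ring.DirectLimit G (fun i j h => f i j h)) := by
  refine .of_forall_fg_eq_map fun I hI => ?_
  obtain ⟨j, J, hJ, rfl⟩ := Ring.DirectLimit.exists_fg_map_eq_of_fg hI
  exact ⟨G j, _, _, J, Ring.DirectLimit.flat_of hflat j, hreg j, hJ, rfl⟩
end

section
/- Let A be a commutative ring that is Henselian along an ideal I ⊆ A, and let i: Spec(A/I) → Spec(A) be the closed immersion induced by the quotient map A → A/I. Then i induces a homeomorphism (in particular a bijection) between the space of connected components of Spec(A/I) and the space of connected components of Spec(A). -/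
/-!
The closed immersion `Spec(A/I) → Spec(A)` has image `V(I)`, which contains every closed point
because `I` lies in the Jacobson radical; as every connected component of `Spec A` is closed, it
meets `V(I)`, so the induced map on components is surjective. Idempotents lift along a Henselian
pair (apply the Henselian property to `X² - X`), so every clopen subset of `Spec(A/I)` is the trace
of a clopen subset of `Spec A`. In a prime spectrum connected components coincide with
quasi-components: the idempotents contained in a prime `x` generate an ideal `T` such that `A/T`
has no nontrivial idempotents, so `V(T)` is connected. Hence the map is injective, and the
component spaces are compact and Hausdorff, so a continuous bijection between them is a
homeomorphism.
-/

theorem ConnectedComponents.t2Space_of_connectedComponent_eq_iInter_isClopen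
    {X : Type*} [TopologicalSpace X]
    (h : ∀ x : X, connectedComponent x = ⋂ s : {s : Set X // IsClopen s ∧ x ∈ s}, s) :
    T2Space (ConnectedComponents X) := by
  refine ⟨surjective_coe.forall₂.2 fun a b hab => ?_⟩
  have hab' : a ∉ connectedComponent b := fun hb => hab (coe_eq_coe'.mpr hb)
  rw [h, Set.mem_iInter, not_forall] at hab'
  obtain ⟨⟨U, hU, hbU⟩, haU⟩ := hab'
  have hsat : ((↑) ⁻¹' ((↑) '' U : Set (ConnectedComponents X))) = U := by
    rw [connectedComponents_preimage_image, hU.biUnion_connectedComponent_eq]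
  have hV : IsClopen ((↑) '' U : Set (ConnectedComponents X)) := by
    rwa [← isQuotientMap_coe.isClopen_preimage, hsat]
  refine ⟨_, _, hV.compl.isOpen, hV.isOpen, fun ha => haU ?_, ⟨b, hbU, rfl⟩, disjoint_compl_left⟩
  exact hsat.subset ha

namespace Ideal

variable {R : Type*} [CommRing R]

theorem exists_isIdempotentElem_mem_span_singleton_of_mem_span {S : Set R}
    (hS : ∀ e ∈ S, IsIdempotentElem e) {a : R} (ha : a ∈ span S) :
    ∃ ε ∈ span S, IsIdempotentElem ε ∧ a ∈ span {ε} := by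
  obtain ⟨t, htS, hat⟩ := Submodule.mem_span_finite_of_mem_span ha
  have hidem : IsIdempotentElem (span (t : Set R)) := by
    refine le_antisymm mul_le_right (span_le.mpr fun e he => ?_)
    exact (hS e (htS he)).eq ▸ mul_mem_mul (subset_span he) (subset_span he)
  obtain ⟨ε, hε, hspan⟩ := (isIdempotentElem_iff_of_fg _ ⟨t, rfl⟩).mp hidem
  rw [submodule_span_eq] at hspan
  exact ⟨ε, span_mono htS (hspan ▸ mem_span_singleton_self ε), hε, hspan ▸ hat⟩

theorem exists_isIdempotentElem_mk_eq_of_span {S : Set R} (hS : ∀ e ∈ S, IsIdempotentElem e)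
    (e : R ⧸ span S) (he : IsIdempotentElem e) :
    ∃ f : R, IsIdempotentElem f ∧ Quotient.mk (span S) f = e := by
  obtain ⟨a, rfl⟩ := Quotient.mk_surjective e
  have ha : a * a - a ∈ span S := by
    rw [← Quotient.eq_zero_iff_mem, map_sub, map_mul, he.eq, sub_self]
  obtain ⟨ε, hεS, hε, hε'⟩ := exists_isIdempotentElem_mem_span_singleton_of_mem_span hS ha
  obtain ⟨r, hr⟩ := mem_span_singleton'.mp hε'
  -- `a * (1 - ε)` is idempotent since `a * a = a + r * ε` and `ε * (1 - ε) = 0`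
  refine ⟨a * (1 - ε), ?_, ?_⟩
  · unfold IsIdempotentElem
    linear_combination (-(1 - ε) ^ 2) * hr + (a - r * (1 - ε)) * hε.eq
  · rw [Quotient.mk_eq_mk_iff_sub_mem, show a * (1 - ε) - a = -(a * ε) by ring]
    exact neg_mem (mul_mem_left _ a hεS)

end Ideal

namespace PrimeSpectrum

variable {R : Type*} [CommRing R]

theorem preconnectedSpace_of_isIdempotentElem_eq_zero_or_one
    (h : ∀ e : R, IsIdempotentElem e → e = 0 ∨ e = 1) : PreconnectedSpace (PrimeSpectrum R) := by
  refine preconnectedSpace_iff_clopen.mpr fun s hs => ?_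
  obtain ⟨e, he, rfl⟩ := isClopen_iff.mp hs
  rcases h e he with rfl | rfl
  · exact Or.inl (by simp)
  · exact Or.inr (by simp)

theorem isIdempotentElem_eq_zero_or_one_of_quotient_span_isIdempotentElem_mem
    (x : PrimeSpectrum R) (e : R ⧸ Ideal.span {e : R | IsIdempotentElem e ∧ e ∈ x.asIdeal})
    (he : IsIdempotentElem e) : e = 0 ∨ e = 1 := by
  obtain ⟨f, hf, rfl⟩ := Ideal.exists_isIdempotentElem_mk_eq_of_span (fun e he => he.1) e he
  have hprod : f * (1 - f) ∈ x.asIdeal := hf.mul_one_sub_self ▸ zero_mem _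
  rcases x.isPrime.mem_or_mem hprod with hfx | hfx
  · exact Or.inl (Ideal.Quotient.eq_zero_iff_mem.mpr (Ideal.subset_span ⟨hf, hfx⟩))
  · refine Or.inr (Ideal.Quotient.eq.mpr ?_)
    rw [← neg_sub]
    exact neg_mem (Ideal.subset_span ⟨hf.one_sub, hfx⟩)

theorem isPreconnected_zeroLocus_isIdempotentElem_mem (x : PrimeSpectrum R) :
    IsPreconnected (zeroLocus {e : R | IsIdempotentElem e ∧ e ∈ x.asIdeal}) := by
  have := preconnectedSpace_of_isIdempotentElem_eq_zero_or_one
    (isIdempotentElem_eq_zero_or_one_of_quotient_span_isIdempotentElem_mem x)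
  rw [← zeroLocus_span, ← Ideal.mk_ker (I := Ideal.span _),
    ← range_comap_of_surjective _ _ Ideal.Quotient.mk_surjective]
  exact isPreconnected_range (continuous_comap _)

theorem connectedComponent_eq_iInter_isClopen (x : PrimeSpectrum R) :
    connectedComponent x = ⋂ s : {s : Set (PrimeSpectrum R) // IsClopen s ∧ x ∈ s}, s := by
  refine connectedComponent_subset_iInter_isClopen.antisymm fun y hy => ?_
  refine (isPreconnected_zeroLocus_isIdempotentElem_mem x).subset_connectedComponent
    (fun e he => he.2) fun e he => ?_
  have hclopen : IsClopen (zeroLocus {e}) := isClopen_iff_zeroLocus.mpr ⟨e, he.1, rfl⟩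
  exact Set.mem_iInter.mp hy ⟨_, hclopen, Set.singleton_subset_iff.mpr he.2⟩ rfl

instance : T2Space (ConnectedComponents (PrimeSpectrum R)) :=
  ConnectedComponents.t2Space_of_connectedComponent_eq_iInter_isClopen
    connectedComponent_eq_iInter_isClopen

variable {S : Type*} [CommRing S]

theorem connectedComponentsMap_comap_injective (f : R →+* S)
    (hf : ∀ e : S, IsIdempotentElem e → ∃ e' : R, IsIdempotentElem e' ∧ f e' = e) :
    Function.Injective (continuous_comap f).connectedComponentsMap := by
  refine ConnectedComponents.surjective_coe.forall₂.2 fun y₁ y₂ hy => ?_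
  have hy' : comap f y₁ ∈ connectedComponent (comap f y₂) := ConnectedComponents.coe_eq_coe'.mp hy
  refine ConnectedComponents.coe_eq_coe'.mpr ?_
  rw [connectedComponent_eq_iInter_isClopen, Set.mem_iInter]
  rintro ⟨V, hV, hy₂V⟩
  obtain ⟨e, he, rfl⟩ := isClopen_iff.mp hV
  obtain ⟨e', he', rfl⟩ := hf e he
  have hclopen : IsClopen (basicOpen e' : Set (PrimeSpectrum R)) := isClopen_iff.mpr ⟨e', he', rfl⟩
  exact hclopen.connectedComponent_subset hy₂V hy'

theorem connectedComponentsMap_comap_mk_surjective {I : Ideal R} (hI : I ≤ Ideal.jacobson ⊥) :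
    Function.Surjective (continuous_comap (Ideal.Quotient.mk I)).connectedComponentsMap := by
  refine ConnectedComponents.surjective_coe.forall.2 fun x => ?_
  obtain ⟨m, hmx, hm⟩ := isClosed_connectedComponent.exists_closed_singleton
    ⟨x, mem_connectedComponent⟩
  have hIm : I ≤ m.asIdeal :=
    hI.trans (sInf_le ⟨bot_le, (isClosed_singleton_iff_isMaximal m).mp hm⟩)
  obtain ⟨y, rfl⟩ : m ∈ Set.range (comap (Ideal.Quotient.mk I)) := by
    rwa [range_comap_of_surjective _ _ Ideal.Quotient.mk_surjective, Ideal.mk_ker]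
  exact ⟨y, ConnectedComponents.coe_eq_coe'.mpr hmx⟩

end PrimeSpectrum

namespace HenselianRing

open Polynomial

variable {A : Type*} [CommRing A] (I : Ideal A) [HenselianRing A I]

theorem exists_isIdempotentElem_mk_eq (e : A ⧸ I) (he : IsIdempotentElem e) :
    ∃ e' : A, IsIdempotentElem e' ∧ Ideal.Quotient.mk I e' = e := by
  obtain ⟨a, rfl⟩ := Ideal.Quotient.mk_surjective e
  have ha : a * a - a ∈ I := by
    rw [← Ideal.Quotient.eq_zero_iff_mem, map_sub, map_mul, he.eq, sub_self]
  have hmonic : (X ^ 2 - X : A[X]).Monic :=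
    monic_X_pow_sub (degree_X_le.trans_lt (by exact_mod_cast Nat.one_lt_two))
  have heval : (X ^ 2 - X : A[X]).eval a ∈ I := by
    simpa [sq] using ha
  -- the derivative `2a - 1` squares to `1 + 4(a² - a)`, a unit modulo `I`
  have hderiv : IsUnit (Ideal.Quotient.mk I ((derivative (X ^ 2 - X : A[X])).eval a)) := by
    refine IsUnit.of_mul_eq_one (Ideal.Quotient.mk I (2 * a - 1)) ?_
    rw [← map_mul, ← map_one (Ideal.Quotient.mk I), Ideal.Quotient.mk_eq_mk_iff_sub_mem]
    convert I.mul_mem_left 4 ha using 1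
    simp only [derivative_sub, derivative_X_pow_succ, Nat.cast_one, map_add, map_one, pow_one,
      derivative_X, eval_sub, eval_mul, eval_add, eval_one, eval_X]
    ring
  obtain ⟨b, hb, hba⟩ := is_henselian (X ^ 2 - X : A[X]) hmonic a heval hderiv
  refine ⟨b, ?_, (Ideal.Quotient.mk_eq_mk_iff_sub_mem b a).mpr hba⟩
  unfold IsIdempotentElem
  linear_combination (by simpa using hb : b ^ 2 - b = 0)

end HenselianRing

/-- Let `A` be a commutative ring which is Henselian along an ideal `I`, and
let `i : Spec(A/I) → Spec(A)` be the closed immersion induced by the quotient map `A → A/I`.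
Then `i` induces a homeomorphism between the spaces of connected components of `Spec(A/I)` and
of `Spec(A)`. -/
theorem stmt_15 (A : Type) [CommRing A] (I : Ideal A) [HenselianRing A I] :
    IsHomeomorph
      ((PrimeSpectrum.continuous_comap (Ideal.Quotient.mk I)).connectedComponentsMap :
        ConnectedComponents (PrimeSpectrum (A ⧸ I)) → ConnectedComponents (PrimeSpectrum A)) := by
  rw [isHomeomorph_iff_continuous_bijective]
  exact ⟨Continuous.connectedComponentsMap_continuous _,
    PrimeSpectrum.connectedComponentsMap_comap_injective _
      (HenselianRing.exists_isIdempotentElem_mk_eq I),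
    PrimeSpectrum.connectedComponentsMap_comap_mk_surjective HenselianRing.jac⟩
end

section
/- Let Λ be a topological abelian group which is the colimit, with the colimit topology, of a countable filtered system (Λ_i) of quasi-compact Hausdorff topological abelian groups with injective continuous transition maps. Then for every profinite set S, every continuous map S → Λ factors through some Λ_i, and the natural homomorphism colim_i C(S, Λ_i) → C(S, Λ) is an isomorphism of abelian groups. -/
/-!
The ranges of the `e i` form an increasing chain of closed subsets of `Λ`, and each `e i` is a
closed embedding: a closed `C ⊆ G i` meets every `G j` in the preimage of the compact, hence
closed, set `f i k '' C ⊆ G k` for `k ≥ i, j`. A compact `K ⊆ Λ` lies in one of these ranges: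
otherwise, along a cofinal sequence `u n`, pick `x n ∈ K` outside the range of `e (u n)`; the
set `{x n}` meets each range in finitely many points, so all its subsets are closed, and being
contained in `K` it must be finite, hence inside a single range after all. Applied to the image
of a compact `S`, this lifts every continuous map `S → Λ` to a continuous map into some `G i`.
-/

open Set Topology TopologicalSpace

section ColimitTopology

variable {ι : Type*} {X : ι → Type*} {Λ : Type*} {e : ∀ i, X i → Λ}

theorem range_mono_of_comp_eq [Preorder ι] (f : ∀ i j, i ≤ j → X i → X j)
    (hcompat : ∀ i j (h : i ≤ j), e j ∘ f i j h = e i) : Monotone fun i => range (e i) := fun i j h => by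
  simpa only [hcompat i j h] using range_comp_subset_range (f i j h) (e j)

theorem exists_subset_range_of_finite [Preorder ι] [IsDirected ι (· ≤ ·)] [Nonempty ι]
    (hmono : Monotone fun i => range (e i)) (hesurj : ∀ x : Λ, ∃ i y, e i y = x)
    {T : Set Λ} (hT : T.Finite) : ∃ i, T ⊆ range (e i) := by
  classical
  choose idx y hy using hesurj
  obtain ⟨M, hM⟩ := Finset.exists_le (hT.toFinset.image idx)
  refine ⟨M, fun x hx => hmono (hM _ (Finset.mem_image_of_mem idx (hT.mem_toFinset.mpr hx))) ?_⟩
  exact ⟨y x, hy x⟩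

variable [∀ i, TopologicalSpace (X i)] [tΛ : TopologicalSpace Λ]

theorem isClosed_iff_forall_isClosed_preimage_of_eq_iSup_coinduced
    (htop : tΛ = ⨆ i, coinduced (e i) inferInstance) {C : Set Λ} :
    IsClosed C ↔ ∀ i, IsClosed (e i ⁻¹' C) := by
  subst htop
  simp only [isClosed_iSup_iff, isClosed_coinduced]

theorem continuous_of_eq_iSup_coinduced (htop : tΛ = ⨆ i, coinduced (e i) inferInstance)
    (i : ι) : Continuous (e i) := by
  rw [continuous_iff_coinduced_le, htop]
  exact le_iSup (fun i => coinduced (e i) inferInstance) i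

theorem isClosed_of_forall_finite_preimage_of_eq_iSup_coinduced [∀ i, T1Space (X i)]
    (htop : tΛ = ⨆ i, coinduced (e i) inferInstance) {T : Set Λ}
    (hT : ∀ i, (e i ⁻¹' T).Finite) : IsClosed T :=
  (isClosed_iff_forall_isClosed_preimage_of_eq_iSup_coinduced htop).mpr fun i => (hT i).isClosed

theorem isClosedMap_of_eq_iSup_coinduced [Preorder ι] [IsDirected ι (· ≤ ·)]
    [∀ i, CompactSpace (X i)] [∀ i, T2Space (X i)]
    (htop : tΛ = ⨆ i, coinduced (e i) inferInstance) (f : ∀ i j, i ≤ j → X i → X j)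
    (hfcont : ∀ i j (h : i ≤ j), Continuous (f i j h))
    (hcompat : ∀ i j (h : i ≤ j), e j ∘ f i j h = e i) (heinj : ∀ i, Function.Injective (e i))
    (i : ι) : IsClosedMap (e i) := by
  intro C hC
  refine (isClosed_iff_forall_isClosed_preimage_of_eq_iSup_coinduced htop).mpr fun j => ?_
  obtain ⟨k, hik, hjk⟩ := directed_of (· ≤ ·) i j
  have hpre : e j ⁻¹' (e i '' C) = f j k hjk ⁻¹' (f i k hik '' C) := by
    rw [← hcompat i k hik, ← hcompat j k hjk, image_comp, preimage_comp,
      preimage_image_eq _ (heinj k)]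
  rw [hpre]
  exact ((hC.isCompact.image (hfcont i k hik)).isClosed).preimage (hfcont j k hjk)

theorem exists_subset_range_of_isCompact [Preorder ι] [IsDirected ι (· ≤ ·)] [Nonempty ι]
    [Countable ι] [∀ i, T1Space (X i)] (htop : tΛ = ⨆ i, coinduced (e i) inferInstance)
    (hmono : Monotone fun i => range (e i)) (heinj : ∀ i, Function.Injective (e i))
    (hesurj : ∀ x : Λ, ∃ i y, e i y = x) {K : Set Λ} (hK : IsCompact K) :
    ∃ i, K ⊆ range (e i) := by
  obtain ⟨u, hu_mono, hu⟩ := Filter.exists_seq_monotone_tendsto_atTop_atTop ι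
  by_contra! hout
  choose x hxK hxu using fun n => not_subset.mp (hout (u n))
  -- `x m` lies in the range of `e (u n)` only for `m < n`
  have hfinite : ∀ T ⊆ range x, ∀ i, (e i ⁻¹' T).Finite := by
    intro T hT i
    obtain ⟨n, hn⟩ := (Filter.tendsto_atTop.mp hu i).exists
    refine ((finite_Iio n).image x).preimage (heinj i).injOn |>.subset fun y hy => ?_
    obtain ⟨m, hm⟩ := hT hy
    refine ⟨m, mem_Iio.mpr <| lt_of_not_ge fun hnm => hxu m ?_, hm⟩
    exact hm ▸ hmono (hn.trans (hu_mono hnm)) ⟨y, rfl⟩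
  have hclosed : ∀ T ⊆ range x, IsClosed T := fun T hT =>
    isClosed_of_forall_finite_preimage_of_eq_iSup_coinduced htop (hfinite T hT)
  have hxfin : (range x).Finite :=
    (hK.of_isClosed_subset (hclosed _ subset_rfl) (range_subset_iff.mpr hxK)).finite
      (isDiscrete_iff_forall_mem_exists_isClosed.mpr fun T hT =>
        ⟨T, hclosed T hT, inter_eq_left.mpr hT⟩)
  obtain ⟨M, hM⟩ := exists_subset_range_of_finite hmono hesurj hxfin
  obtain ⟨n, hn⟩ := (Filter.tendsto_atTop.mp hu M).exists
  exact hxu n (hmono hn (hM ⟨n, rfl⟩))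

end ColimitTopology

theorem Topology.IsEmbedding.exists_continuous_lift {X Y S : Type*} [TopologicalSpace X]
    [TopologicalSpace Y] [TopologicalSpace S] {e : X → Y} (he : IsEmbedding e) (φ : C(S, Y))
    (hφ : range φ ⊆ range e) : ∃ g : C(S, X), ∀ s, e (g s) = φ s := by
  choose g hg using fun s => hφ ⟨s, rfl⟩
  have hcomp : e ∘ g = φ := funext hg
  exact ⟨⟨g, he.continuous_iff.mpr (hcomp ▸ φ.continuous)⟩, hg⟩

theorem stmt_16_general (ι : Type) [Countable ι] [Preorder ι] [IsDirected ι (· ≤ ·)] [Nonempty ι]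
    (G : ι → Type) [∀ i, AddCommGroup (G i)] [∀ i, TopologicalSpace (G i)]
    [∀ i, CompactSpace (G i)] [∀ i, T2Space (G i)]
    (f : ∀ i j, i ≤ j → G i →+ G j)
    (hfcont : ∀ (i j : ι) (h : i ≤ j), Continuous (f i j h))
    (Λ : Type) [AddCommGroup Λ] [tΛ : TopologicalSpace Λ]
    (e : ∀ i, G i →+ Λ)
    (hecompat : ∀ (i j : ι) (h : i ≤ j) (x : G i), e j (f i j h x) = e i x)
    (heinj : ∀ i, Function.Injective (e i))
    (hesurj : ∀ x : Λ, ∃ i y, e i y = x)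
    (htop : tΛ = ⨆ i, TopologicalSpace.coinduced (e i) inferInstance)
    (S : Type) [TopologicalSpace S] [CompactSpace S] :
    (∀ φ : C(S, Λ), ∃ (i : ι) (g : C(S, G i)), ∀ s, e i (g s) = φ s) ∧
    (∀ (i : ι) (g : C(S, G i)), (∀ s, e i (g s) = 0) →
      ∃ (j : ι) (h : i ≤ j), ∀ s, f i j h (g s) = 0) := by
  have hcompat : ∀ i j (h : i ≤ j), ⇑(e j) ∘ ⇑(f i j h) = ⇑(e i) :=
    fun i j h => funext (hecompat i j h)
  have hmono := range_mono_of_comp_eq (fun i j h => ⇑(f i j h)) hcompat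
  refine ⟨fun φ => ?_, fun i g hg => ⟨i, le_rfl, fun s => ?_⟩⟩
  · obtain ⟨i, hi⟩ := exists_subset_range_of_isCompact htop hmono heinj hesurj
      (isCompact_range φ.continuous)
    have hemb : IsClosedEmbedding (e i) :=
      .of_continuous_injective_isClosedMap (continuous_of_eq_iSup_coinduced htop i) (heinj i)
        (isClosedMap_of_eq_iSup_coinduced htop (fun i j h => ⇑(f i j h)) hfcont hcompat heinj i)
    exact ⟨i, hemb.isEmbedding.exists_continuous_lift φ hi⟩
  · rw [heinj i (by rw [hg s, map_zero] : e i (g s) = e i 0), map_zero]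

/-- Let `Λ` be a topological abelian group which is the colimit, with the
colimit (final) topology, of a countable filtered system `(G i)` of quasi-compact Hausdorff
topological abelian groups with injective continuous transition maps.  Then for every profinite
set `S`, every continuous map `S → Λ` factors (continuously) through some `G i`, and the natural
homomorphism `colim_i C(S, G i) → C(S, Λ)` is an isomorphism of abelian groups (expressed here
by the surjectivity of the induced map together with its injectivity, elementwise). -/
theorem stmt_16 (ι : Type) [Countable ι] [Preorder ι] [IsDirected ι (· ≤ ·)] [Nonempty ι]
    (G : ι → Type) [∀ i, AddCommGroup (G i)] [∀ i, TopologicalSpace (G i)]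
    [∀ i, IsTopologicalAddGroup (G i)] [∀ i, CompactSpace (G i)] [∀ i, T2Space (G i)]
    (f : ∀ i j, i ≤ j → G i →+ G j)
    (hfcont : ∀ (i j : ι) (h : i ≤ j), Continuous (f i j h))
    (hfinj : ∀ (i j : ι) (h : i ≤ j), Function.Injective (f i j h))
    (hftrans : ∀ (i j k : ι) (hij : i ≤ j) (hjk : j ≤ k) (x : G i),
      f j k hjk (f i j hij x) = f i k (hij.trans hjk) x)
    (Λ : Type) [AddCommGroup Λ] [tΛ : TopologicalSpace Λ]
    (e : ∀ i, G i →+ Λ)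
    (hecompat : ∀ (i j : ι) (h : i ≤ j) (x : G i), e j (f i j h x) = e i x)
    (heinj : ∀ i, Function.Injective (e i))
    (hesurj : ∀ x : Λ, ∃ i y, e i y = x)
    (htop : tΛ = ⨆ i, TopologicalSpace.coinduced (e i) inferInstance)
    (S : Type) [TopologicalSpace S] [CompactSpace S] [T2Space S] [TotallyDisconnectedSpace S] :
    (∀ φ : C(S, Λ), ∃ (i : ι) (g : C(S, G i)), ∀ s, e i (g s) = φ s) ∧
    (∀ (i : ι) (g : C(S, G i)), (∀ s, e i (g s) = 0) →
      ∃ (j : ι) (h : i ≤ j), ∀ s, f i j h (g s) = 0) :=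
  stmt_16_general ι G f hfcont Λ (tΛ := tΛ) e hecompat heinj hesurj htop S
end

section
/- Let φ: Λ → Λ' be a surjective homomorphism of commutative rings whose kernel consists of nilpotent elements. Let M^a → M^{a+1} → ⋯ → M^b be a bounded complex of finitely generated projective Λ-modules such that the complex M^a ⊗_Λ Λ' → ⋯ → M^b ⊗_Λ Λ' obtained by applying − ⊗_Λ Λ' termwise is exact. Then the original complex M^a → ⋯ → M^b is exact. -/
/-!
Over `Λ'` the base-changed complex is a bounded-above exact complex of projective modules, so it
admits a contracting homotopy `h`, built by descending induction from the top degree out of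
sections of the differentials on cycles. Since `Λ → Λ'` is surjective and the `M i` are
projective, `h` lifts to maps `s` over `Λ`. The endomorphisms `d s + s d` reduce to the identity
modulo the kernel, which is nil and hence lies in the Jacobson radical; by Nakayama they are
surjective, hence bijective. A complex carrying a null-homotopic chain automorphism is exact.
-/

open TensorProduct

theorem LinearMap.exact_of_homotopy_surjective_injective {R A B C D : Type*} [Semiring R]
    [AddCommMonoid A] [AddCommMonoid B] [AddCommMonoid C] [AddCommMonoid D]
    [Module R A] [Module R B] [Module R C] [Module R D]
    {f : A →ₗ[R] B} {g : B →ₗ[R] C} {k : C →ₗ[R] D}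
    {s : B →ₗ[R] A} {t : C →ₗ[R] B} {u : D →ₗ[R] C}
    (hgf : g ∘ₗ f = 0) (hkg : k ∘ₗ g = 0)
    (hB : Function.Surjective (f ∘ₗ s + t ∘ₗ g))
    (hC : Function.Injective (g ∘ₗ t + u ∘ₗ k)) :
    Function.Exact f g := by
  have hgf' (x : A) : g (f x) = 0 := LinearMap.congr_fun hgf x
  have hkg' (y : B) : k (g y) = 0 := LinearMap.congr_fun hkg y
  intro y
  refine ⟨fun hy => ?_, fun ⟨x, hx⟩ => hx ▸ hgf' x⟩
  obtain ⟨w, rfl⟩ := hB y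
  have hgw : g w = 0 := by
    refine hC (?_ : _ = (g ∘ₗ t + u ∘ₗ k) 0)
    have hgtgw : g (t (g w)) = 0 := by
      simpa [hgf'] using hy
    simp [hgtgw, hkg']
  exact ⟨s w, by simp [hgw]⟩

section Contraction

variable {R : Type*} [Ring R] {N : ℤ → Type*} [∀ i, AddCommGroup (N i)]
  [∀ i, Module R (N i)] (D : ∀ i, N i →ₗ[R] N (i + 1))

theorem exists_section_on_cycles_of_succ {k : ℤ} [Module.Projective R (N (k + 1))]
    (hk : Function.Exact (D k) (D (k + 1)))
    (hDD : ∀ x, D (k + 1 + 1) (D (k + 1) x) = 0)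
    (σ' : N (k + 1 + 1) →ₗ[R] N (k + 1))
    (hσ' : ∀ y, D (k + 1 + 1) y = 0 → D (k + 1) (σ' y) = y) :
    ∃ σ : N (k + 1) →ₗ[R] N k, ∀ x, D (k + 1) x = 0 → D k (σ x) = x := by
  let π : N (k + 1) →ₗ[R] N (k + 1) := LinearMap.id - σ' ∘ₗ D (k + 1)
  have hπ : ∀ x, π x ∈ LinearMap.range (D k) := fun x =>
    (hk _).1 (by simp [π, hσ' _ (hDD x)])
  obtain ⟨σ, hσ⟩ := Module.projective_lifting_property (D k).rangeRestrict
    (π.codRestrict _ hπ) (D k).surjective_rangeRestrict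
  refine ⟨σ, fun x hx => ?_⟩
  simpa [π, hx] using congr_arg Subtype.val (LinearMap.congr_fun hσ x)

theorem exists_section_on_cycles [∀ k, Module.Projective R (N k)] (b : ℤ)
    (hbdd : ∀ k, b < k → Subsingleton (N k))
    (hexact : ∀ k, Function.Exact (D k) (D (k + 1))) (k : ℤ) :
    ∃ σ : N (k + 1) →ₗ[R] N k, ∀ x, D (k + 1) x = 0 → D k (σ x) = x := by
  obtain ⟨n, hn⟩ : ∃ n : ℕ, b ≤ k + n := ⟨(b - k).toNat, by omega⟩
  induction n generalizing k with
  | zero =>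
    have := hbdd (k + 1) (by omega)
    exact ⟨0, fun _ _ => Subsingleton.elim _ _⟩
  | succ n ih =>
    obtain ⟨σ', hσ'⟩ := ih (k + 1) (by push_cast at hn; omega)
    exact exists_section_on_cycles_of_succ D (hexact k)
      (hexact (k + 1)).apply_apply_eq_zero σ' hσ'

theorem exists_contraction_of_exact [∀ k, Module.Projective R (N k)] (b : ℤ)
    (hbdd : ∀ k, b < k → Subsingleton (N k))
    (hexact : ∀ k, Function.Exact (D k) (D (k + 1))) :
    ∃ h : ∀ k, N (k + 1) →ₗ[R] N k,
      ∀ k, D k ∘ₗ h k + h (k + 1) ∘ₗ D (k + 1) = LinearMap.id := by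
  choose σ hσ using exists_section_on_cycles D b hbdd hexact
  -- `D σ` fixes the cycle `x - σ (D x)`, which is exactly the homotopy identity at `x`.
  refine ⟨fun k => σ k - σ k ∘ₗ σ (k + 1) ∘ₗ D (k + 1), fun k => ?_⟩
  ext x
  have hcycle : D (k + 1) (x - σ (k + 1) (D (k + 1) x)) = 0 := by
    rw [map_sub, hσ (k + 1) _ ((hexact (k + 1)).apply_apply_eq_zero x), sub_self]
  have hfix := hσ k _ hcycle
  simp only [map_sub] at hfix
  simp [hfix, (hexact (k + 1)).apply_apply_eq_zero x]

end Contraction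

section BaseChange

variable {Λ Λ' : Type*} [CommRing Λ] [CommRing Λ'] [Algebra Λ Λ']

theorem mem_ker_smul_top_of_one_tmul_eq_zero (hsurj : Function.Surjective (algebraMap Λ Λ'))
    {M : Type*} [AddCommGroup M] [Module Λ M] {x : M} (hx : (1 : Λ') ⊗ₜ[Λ] x = 0) :
    x ∈ RingHom.ker (algebraMap Λ Λ') • (⊤ : Submodule Λ M) := by
  let e : Λ' ≃ₐ[Λ] Λ ⧸ RingHom.ker (algebraMap Λ Λ') :=
    (Ideal.quotientKerAlgEquivOfSurjective (f := Algebra.ofId Λ Λ') hsurj).symm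
  let Φ := (quotTensorEquivQuotSMul M _).toLinearMap ∘ₗ e.toLinearMap.rTensor M
  have hΦ : Φ ((1 : Λ') ⊗ₜ[Λ] x) = Submodule.Quotient.mk x := by
    have he1 : e 1 = Ideal.Quotient.mk _ 1 := by rw [map_one, map_one]
    simp [Φ, he1]
  rw [← Submodule.Quotient.mk_eq_zero, ← hΦ, hx, map_zero]

theorem LinearMap.bijective_of_baseChange_eq_id
    (hsurj : Function.Surjective (algebraMap Λ Λ'))
    (hjac : RingHom.ker (algebraMap Λ Λ') ≤ Ideal.jacobson ⊥)
    {M : Type*} [AddCommGroup M] [Module Λ M] [Module.Finite Λ M]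
    (e : M →ₗ[Λ] M) (he : e.baseChange Λ' = LinearMap.id) : Function.Bijective e := by
  set I := RingHom.ker (algebraMap Λ Λ')
  have hmod (x : M) : e x - x ∈ I • (⊤ : Submodule Λ M) :=
    mem_ker_smul_top_of_one_tmul_eq_zero hsurj (by
      rw [tmul_sub, ← LinearMap.baseChange_tmul, he, LinearMap.id_apply, sub_self])
  have hspan : (⊤ : Submodule Λ M) ≤ LinearMap.range e ⊔ I • ⊤ := fun x _ =>
    sub_sub_cancel (e x) x ▸ Submodule.sub_mem_sup (LinearMap.mem_range_self e x) (hmod x)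
  have hsurj_e : Function.Surjective e := LinearMap.range_eq_top.mp <| top_le_iff.mp <|
    hspan.trans <| sup_le le_rfl <|
      Submodule.smul_le_of_le_smul_of_le_jacobson_bot Module.Finite.fg_top hjac hspan
  exact ⟨OrzechProperty.injective_of_surjective_endomorphism e hsurj_e, hsurj_e⟩

theorem LinearMap.exists_baseChange_eq (hsurj : Function.Surjective (algebraMap Λ Λ'))
    {P N : Type*} [AddCommGroup P] [Module Λ P] [Module.Projective Λ P]
    [AddCommGroup N] [Module Λ N] (h : Λ' ⊗[Λ] P →ₗ[Λ'] Λ' ⊗[Λ] N) :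
    ∃ s : P →ₗ[Λ] N, s.baseChange Λ' = h := by
  obtain ⟨s, hs⟩ := Module.projective_lifting_property (TensorProduct.mk Λ Λ' N 1)
    (h.restrictScalars Λ ∘ₗ TensorProduct.mk Λ Λ' P 1) (TensorProduct.mk_surjective _ _ _ hsurj)
  refine ⟨s, ?_⟩
  ext x
  simpa using LinearMap.congr_fun hs x

end BaseChange

theorem stmt_17_general (Λ Λ' : Type) [CommRing Λ] [CommRing Λ'] [Algebra Λ Λ']
    (hsurj : Function.Surjective (algebraMap Λ Λ'))
    (hnil : ∀ x ∈ RingHom.ker (algebraMap Λ Λ'), IsNilpotent x)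
    (a b : ℤ)
    (M : ℤ → Type) [∀ i, AddCommGroup (M i)] [∀ i, Module Λ (M i)]
    [∀ i, Module.Finite Λ (M i)] [∀ i, Module.Projective Λ (M i)]
    (hbdd : ∀ i : ℤ, (i < a ∨ b < i) → Subsingleton (M i))
    (d : ∀ i : ℤ, M i →ₗ[Λ] M (i + 1))
    (hcomplex : ∀ i : ℤ, (d (i + 1)).comp (d i) = 0)
    (hexact : ∀ i : ℤ,
      Function.Exact ((d i).baseChange Λ') ((d (i + 1)).baseChange Λ')) :
    ∀ i : ℤ, Function.Exact (d i) (d (i + 1)) := by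
  have hjac : RingHom.ker (algebraMap Λ Λ') ≤ Ideal.jacobson ⊥ := fun x hx =>
    Ideal.jacobson_bot (R := Λ) ▸
      nilradical_le_jacobson Λ (mem_nilradical.mpr (hnil x hx))
  have hbdd' : ∀ k, b < k → Subsingleton (Λ' ⊗[Λ] M k) := fun k hk => by
    have := hbdd k (Or.inr hk)
    infer_instance
  obtain ⟨h, hh⟩ := exists_contraction_of_exact (fun k => (d k).baseChange Λ') b hbdd' hexact
  choose s hs using fun k => LinearMap.exists_baseChange_eq hsurj (h k)
  have hE : ∀ k, Function.Bijective (d k ∘ₗ s k + s (k + 1) ∘ₗ d (k + 1)) := fun k =>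
    LinearMap.bijective_of_baseChange_eq_id hsurj hjac _ (by
      rw [LinearMap.baseChange_add, LinearMap.baseChange_comp, LinearMap.baseChange_comp, hs, hs,
        hh])
  intro i
  exact LinearMap.exact_of_homotopy_surjective_injective (hcomplex i) (hcomplex (i + 1))
    (hE i).2 (hE (i + 1)).1

/-- Let `Λ → Λ'` be a surjective homomorphism of commutative rings whose
kernel consists of nilpotent elements.  Let `M^a → M^{a+1} → ⋯ → M^b` be a bounded complex of
finitely generated projective `Λ`-modules (encoded as a `ℤ`-indexed complex whose terms vanish
outside `[a, b]`) such that the complex obtained by applying `− ⊗_Λ Λ'` termwise is exact.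
Then the original complex is exact. -/
theorem stmt_17 (Λ Λ' : Type) [CommRing Λ] [CommRing Λ'] [Algebra Λ Λ']
    (hsurj : Function.Surjective (algebraMap Λ Λ'))
    (hnil : ∀ x ∈ RingHom.ker (algebraMap Λ Λ'), IsNilpotent x)
    (a b : ℤ) (hab : a ≤ b)
    (M : ℤ → Type) [∀ i, AddCommGroup (M i)] [∀ i, Module Λ (M i)]
    [∀ i, Module.Finite Λ (M i)] [∀ i, Module.Projective Λ (M i)]
    (hbdd : ∀ i : ℤ, (i < a ∨ b < i) → Subsingleton (M i))
    (d : ∀ i : ℤ, M i →ₗ[Λ] M (i + 1))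
    (hcomplex : ∀ i : ℤ, (d (i + 1)).comp (d i) = 0)
    (hexact : ∀ i : ℤ,
      Function.Exact ((d i).baseChange Λ') ((d (i + 1)).baseChange Λ')) :
    ∀ i : ℤ, Function.Exact (d i) (d (i + 1)) :=
  stmt_17_general Λ Λ' hsurj hnil a b M hbdd d hcomplex hexact
end

section
/- Let K be a number field with ring of integers O_K. Then the profinite completion Ô_K = ∏_𝔭 O_{K_𝔭} (the product over all finite places 𝔭 of K of the valuation rings of the completions K_𝔭) and the finite adele ring 𝔸_{K,f} of K are semi-hereditary commutative rings. -/
/-!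
Both rings are built pointwise from valuation rings, so for `a, b` the places split into those
where `a ∣ b` and those where `b ∣ a`. If `s` is the idempotent cutting out the first set, then
`s * a + (1 - s) * b` generates `(a, b)`; hence the rings are Bézout and it suffices that
principal ideals are projective. The annihilator of `a` equals that of the idempotent `e` which
is `1` exactly where `a ≠ 0`, so `(a) ≅ R ⧸ Ann(a) = R ⧸ Ann(e) ≅ (e)`, a direct summand of `R`.
-/

open IsDedekindDomain NumberField

def IsSemihereditaryRing (R : Type*) [CommRing R] : Prop :=
  ∀ I : Ideal R, I.FG → Module.Projective R I

section CommRing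

variable {R : Type*} [CommRing R]

open LinearMap in
theorem IsIdempotentElem.projective_range_toSpanSingleton {e : R} (he : IsIdempotentElem e) :
    Module.Projective R (range (toSpanSingleton R R e)) :=
  .of_split (range (toSpanSingleton R R e)).subtype (toSpanSingleton R R e).rangeRestrict <| by
    ext ⟨_, r, rfl⟩
    simp [mul_assoc, he.eq]

open LinearMap in
theorem Ideal.projective_span_singleton_of_mul_eq_zero_iff_s18 {a e : R} (he : IsIdempotentElem e)
    (hae : ∀ x, x * a = 0 ↔ x * e = 0) : Module.Projective R (Ideal.span {a}) := by
  have hker : ker (toSpanSingleton R R a) = ker (toSpanSingleton R R e) := by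
    ext x; simpa using hae x
  rw [Ideal.span, LinearMap.span_singleton_eq_range]
  have := he.projective_range_toSpanSingleton
  exact .of_equiv' <| (toSpanSingleton R R e).quotKerEquivRange.symm.trans
    ((Submodule.quotEquivOfEq _ _ hker.symm).trans (toSpanSingleton R R a).quotKerEquivRange)

theorem IsBezout.of_exists_isIdempotentElem
    (h : ∀ a b : R, ∃ s, IsIdempotentElem s ∧ s * a ∣ s * b ∧ (1 - s) * b ∣ (1 - s) * a) :
    IsBezout R := by
  refine IsBezout.iff_span_pair_isPrincipal.2 fun a b => ?_
  obtain ⟨s, hs, ⟨c, hc⟩, ⟨d, hd⟩⟩ := h a b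
  refine ⟨s * a + (1 - s) * b, le_antisymm ?_ ?_⟩
  · rw [Ideal.submodule_span_eq, Ideal.span_le, Set.insert_subset_iff, Set.singleton_subset_iff]
    refine ⟨Ideal.mem_span_singleton'.2 ⟨s + (1 - s) * d, ?_⟩,
      Ideal.mem_span_singleton'.2 ⟨s * c + (1 - s), ?_⟩⟩
    · linear_combination (a - a * d - b + b * d) * hs.eq - hd
    · linear_combination (a * c - a - b * c + b) * hs.eq - hc
  · rw [Ideal.submodule_span_eq, Ideal.span_singleton_le_iff_mem]
    exact Ideal.mem_span_pair.2 ⟨s, 1 - s, rfl⟩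

theorem IsSemihereditaryRing.of_isBezout [IsBezout R]
    (h : ∀ a : R, ∃ e, IsIdempotentElem e ∧ ∀ x, x * a = 0 ↔ x * e = 0) :
    IsSemihereditaryRing R := by
  intro I hI
  obtain ⟨a, rfl⟩ := (IsBezout.isPrincipal_of_FG I hI).principal
  obtain ⟨e, he, hae⟩ := h a
  exact Ideal.projective_span_singleton_of_mul_eq_zero_iff_s18 he hae

theorem mul_eq_zero_iff_mul_ite_eq_zero {M₀ : Type*} [MulZeroOneClass M₀] [NoZeroDivisors M₀]
    [DecidableEq M₀] (x a : M₀) : x * a = 0 ↔ x * (if a ≠ 0 then 1 else 0) = 0 := by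
  by_cases ha : a = 0 <;> simp [ha]

end CommRing

section Pi

variable {ι : Type*} {R : ι → Type*} [∀ i, CommRing (R i)]

instance Pi.isBezout_of_preValuationRing [∀ i, PreValuationRing (R i)] : IsBezout (Π i, R i) := by
  classical
  refine .of_exists_isIdempotentElem fun a b =>
    ⟨fun i => if a i ∣ b i then 1 else 0, ?_, pi_dvd_iff.2 fun i => ?_, pi_dvd_iff.2 fun i => ?_⟩
  · ext i; dsimp only [Pi.mul_apply]; split_ifs <;> simp
  · dsimp only [Pi.mul_apply]
    split_ifs with h <;> simp [h]
  · dsimp only [Pi.mul_apply, Pi.sub_apply, Pi.one_apply]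
    split_ifs with h
    · simp
    · simpa using (ValuationRing.dvd_total (a i) (b i)).resolve_left h

theorem Pi.exists_isIdempotentElem_mul_eq_zero_iff [∀ i, NoZeroDivisors (R i)] (a : Π i, R i) :
    ∃ e, IsIdempotentElem e ∧ ∀ x, x * a = 0 ↔ x * e = 0 := by
  classical
  refine ⟨fun i => if a i ≠ 0 then 1 else 0, ?_, fun x => ?_⟩
  · ext i; dsimp only [Pi.mul_apply]; split_ifs <;> simp
  · simp only [funext_iff, Pi.mul_apply, Pi.zero_apply, mul_eq_zero_iff_mul_ite_eq_zero (x _) (a _)]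

theorem IsSemihereditaryRing.pi [∀ i, NoZeroDivisors (R i)] [∀ i, PreValuationRing (R i)] :
    IsSemihereditaryRing (Π i, R i) :=
  IsSemihereditaryRing.of_isBezout Pi.exists_isIdempotentElem_mul_eq_zero_iff

end Pi

theorem ValuationSubring.exists_mem_mul_eq_or {K : Type*} [Field K] (A : ValuationSubring K)
    (x y : K) : (∃ c ∈ A, y = x * c) ∨ ∃ c ∈ A, x = y * c := by
  by_cases hy : y = 0
  · exact .inl ⟨0, A.zero_mem, by simp [hy]⟩
  by_cases hx : x = 0
  · exact .inr ⟨0, A.zero_mem, by simp [hx]⟩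
  rcases A.mem_or_inv_mem (y / x) with h | h
  · exact .inl ⟨y / x, h, by field_simp⟩
  · exact .inr ⟨(y / x)⁻¹, h, by field_simp⟩

open scoped RestrictedProduct

namespace RestrictedProduct

section Subring

variable {ι : Type*} {R : ι → Type*} [∀ i, CommRing (R i)] {S : ι → Type*}
  [∀ i, SetLike (S i) (R i)] [∀ i, SubringClass (S i) (R i)] {B : ∀ i, S i} {𝓕 : Filter ι}

theorem dvd_of_forall_exists_mem {x y : Πʳ i, [R i, B i]_[𝓕]}
    (h : ∀ i, ∃ c ∈ B i, y i = x i * c) : x ∣ y := by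
  choose c hcB hc using h
  exact ⟨⟨c, .of_forall hcB⟩, ext _ _ hc⟩

variable (B 𝓕) in
def indicator (p : ι → Prop) [DecidablePred p] : Πʳ i, [R i, B i]_[𝓕] :=
  ⟨fun i => if p i then 1 else 0, .of_forall fun i => by
    dsimp only; split_ifs; exacts [one_mem _, zero_mem _]⟩

@[simp]
theorem indicator_apply (p : ι → Prop) [DecidablePred p] (i : ι) :
    indicator B 𝓕 p i = if p i then 1 else 0 :=
  rfl

theorem isIdempotentElem_indicator (p : ι → Prop) [DecidablePred p] :
    IsIdempotentElem (indicator B 𝓕 p) :=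
  ext _ _ fun i => by simp only [mul_apply, indicator_apply]; split_ifs <;> simp

theorem exists_isIdempotentElem_mul_eq_zero_iff [∀ i, NoZeroDivisors (R i)]
    (a : Πʳ i, [R i, B i]_[𝓕]) : ∃ e, IsIdempotentElem e ∧ ∀ x, x * a = 0 ↔ x * e = 0 := by
  classical
  refine ⟨indicator B 𝓕 (fun i => a i ≠ 0), isIdempotentElem_indicator _, fun x => ?_⟩
  simp only [RestrictedProduct.ext_iff, mul_apply, zero_apply, indicator_apply,
    mul_eq_zero_iff_mul_ite_eq_zero (x _) (a _)]

end Subring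

variable {ι : Type*} {K : ι → Type*} [∀ i, Field (K i)] {A : ∀ i, ValuationSubring (K i)}
  {𝓕 : Filter ι}

instance isBezout : IsBezout (Πʳ i, [K i, A i]_[𝓕]) := by
  classical
  refine .of_exists_isIdempotentElem fun a b =>
    ⟨indicator A 𝓕 (fun i => ∃ c ∈ A i, b i = a i * c), isIdempotentElem_indicator _,
      dvd_of_forall_exists_mem fun i => ?_, dvd_of_forall_exists_mem fun i => ?_⟩
  · simp only [mul_apply, indicator_apply]
    split_ifs with h
    · obtain ⟨c, hc, hbc⟩ := h
      exact ⟨c, hc, by rw [hbc, one_mul, one_mul]⟩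
    · exact ⟨0, zero_mem _, by simp⟩
  · simp only [sub_apply, one_apply, mul_apply, indicator_apply]
    split_ifs with h
    · exact ⟨0, zero_mem _, by simp⟩
    · obtain ⟨c, hc, hac⟩ := ((A i).exists_mem_mul_eq_or (a i) (b i)).resolve_left h
      exact ⟨c, hc, by rw [hac, sub_zero, one_mul, one_mul]⟩

theorem isSemihereditaryRing : IsSemihereditaryRing (Πʳ i, [K i, A i]_[𝓕]) :=
  IsSemihereditaryRing.of_isBezout exists_isIdempotentElem_mul_eq_zero_iff

end RestrictedProduct

/-- Let `K` be a number field with ring of integers `O_K`.  Then the profinite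
completion `Ô_K = ∏_𝔭 O_{K_𝔭}` (product over the finite places of `K` of the valuation rings of
the completions) and the finite adele ring `𝔸_{K,f}` are semi-hereditary commutative rings. -/
theorem stmt_18 (K : Type) [Field K] [NumberField K] :
    IsSemihereditaryRing (Π v : HeightOneSpectrum (𝓞 K), v.adicCompletionIntegers K) ∧
    IsSemihereditaryRing (FiniteAdeleRing (𝓞 K) K) :=
  ⟨IsSemihereditaryRing.pi, RestrictedProduct.isSemihereditaryRing⟩
end

section
/- Let p be a prime, let βℕ be the Stone–Čech compactification of the discrete space ℕ, and let F ∈ C(βℕ, ℚ_p) be the unique continuous extension of the map ℕ → ℚ_p, n ↦ pⁿ. Then F(x) = 0 for every point x ∈ βℕ ∖ ℕ, and yet multiplication by F on the ring C(βℕ, ℚ_p) is injective, i.e. F is a non-zero-divisor: if g ∈ C(βℕ, ℚ_p) satisfies F·g = 0, then g = 0. -/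
/-!
Since `pⁿ → 0` in `ℚ_[p]`, `F` vanishes on the remainder: a continuous map on `βα` takes at each
point of the remainder the cofinite limit of its restriction to `α`, for otherwise some
neighbourhood of the point would meet `α` in a finite set, which is closed in `βα`. Yet `F` has
no zeros on the dense subset `ℕ`, so `F * g = 0` forces `g` to vanish on `ℕ`, hence everywhere.
-/

open Filter Topology

theorem apply_eq_of_tendsto_cofinite_of_notMem_range_stoneCechUnit {α X : Type*}
    [TopologicalSpace α] [TopologicalSpace X] [T2Space X] {F : StoneCech α → X}
    (hF : Continuous F) {L : X} (hL : Tendsto (F ∘ stoneCechUnit) cofinite (𝓝 L))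
    {x : StoneCech α} (hx : x ∉ Set.range stoneCechUnit) : F x = L := by
  by_contra hne
  obtain ⟨U, W, hU, hW, hxU, hLW, hUW⟩ := t2_separation hne
  have hfinite : {a | F (stoneCechUnit a) ∉ W}.Finite := hL (hW.mem_nhds hLW)
  have hsub : F ⁻¹' U ∩ Set.range stoneCechUnit ⊆
      stoneCechUnit '' {a | F (stoneCechUnit a) ∉ W} := by
    rintro _ ⟨hU', a, rfl⟩
    exact ⟨a, Set.disjoint_left.mp hUW hU', rfl⟩
  have hclosure : x ∈ closure (F ⁻¹' U ∩ Set.range stoneCechUnit) :=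
    denseRange_stoneCechUnit.open_subset_closure_inter (hU.preimage hF) hxU
  obtain ⟨a, -, rfl⟩ := (hfinite.image _).isClosed.closure_subset (closure_mono hsub hclosure)
  exact hx ⟨a, rfl⟩

theorem ContinuousMap.eq_zero_of_mul_eq_zero_of_dense {X R : Type*} [TopologicalSpace X]
    [TopologicalSpace R] [T2Space R] [MulZeroClass R] [NoZeroDivisors R] [ContinuousMul R]
    {F g : C(X, R)} {s : Set X} (hs : Dense s) (hF : ∀ x ∈ s, F x ≠ 0) (hFg : F * g = 0) :
    g = 0 := by
  refine DFunLike.coe_injective (Continuous.ext_on hs g.continuous continuous_const ?_)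
  intro x hx
  have hprod : F x * g x = 0 := congrFun (congrArg DFunLike.coe hFg) x
  exact (mul_eq_zero.mp hprod).resolve_left (hF x hx)

/-- Let `p` be a prime and let `F ∈ C(βℕ, ℚ_[p])` be the (unique) continuous
extension of the map `ℕ → ℚ_[p]`, `n ↦ pⁿ`, to the Stone–Čech compactification `βℕ` of the
discrete space `ℕ`.  Then `F` vanishes at every point of `βℕ ∖ ℕ`, and yet `F` is a
non-zero-divisor in the ring `C(βℕ, ℚ_[p])`: if `F · g = 0` then `g = 0`. -/
theorem stmt_19 (p : ℕ) [Fact p.Prime] (F : C(StoneCech ℕ, ℚ_[p]))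
    (hF : ∀ n : ℕ, F (stoneCechUnit n) = (p : ℚ_[p]) ^ n) :
    (∀ x : StoneCech ℕ, (∀ n : ℕ, x ≠ stoneCechUnit n) → F x = 0) ∧
    (∀ g : C(StoneCech ℕ, ℚ_[p]), F * g = 0 → g = 0) := by
  constructor
  · intro x hx
    have hpow : Tendsto (fun n : ℕ => (p : ℚ_[p]) ^ n) atTop (𝓝 0) :=
      tendsto_pow_atTop_nhds_zero_of_norm_lt_one Padic.norm_p_lt_one
    refine apply_eq_of_tendsto_cofinite_of_notMem_range_stoneCechUnit F.continuous ?_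
      (by rintro ⟨n, rfl⟩; exact hx n rfl)
    rw [Nat.cofinite_eq_atTop]
    simpa only [Function.comp_def, hF] using hpow
  · intro g hFg
    refine ContinuousMap.eq_zero_of_mul_eq_zero_of_dense denseRange_stoneCechUnit ?_ hFg
    rintro _ ⟨n, rfl⟩
    rw [hF n]
    exact pow_ne_zero n (Nat.cast_ne_zero.mpr (Fact.out : p.Prime).ne_zero)
end
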